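/- arXiv:math/0102138 — 7 statements merged into one kernel-verified Lean document; each statement's English description precedes it below -/
import Mathlib

section
/- Let A ∈ M_n(ℂ) and C ∈ M_m(ℂ) be positive semidefinite matrices and B an n×m complex matrix. The (n+m)×(n+m) block matrix [[A, B],[B*, C]] is positive semidefinite if and only if there exists an n×m complex matrix Γ with operator norm ‖Γ‖ ≤ 1 such that B = A^{1/2} Γ C^{1/2}, where A^{1/2} and C^{1/2} are the positive semidefinite square roots of A and C. -/
set_option maxHeartbeats 1000000

open Complex Matrix
open scoped ComplexOrder Matrix.Norms.L2Operator

/-- The positive semidefinite square root, as `Matrix.PosSemidef.sqrt` was defined in the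
older Mathlib (it has since been removed). -/
noncomputable def Matrix.PosSemidef.sqrt {n 𝕜 : Type*} [Fintype n] [RCLike 𝕜] [DecidableEq n]
    {A : Matrix n n 𝕜} (hA : A.PosSemidef) : Matrix n n 𝕜 :=
  hA.1.eigenvectorUnitary.1 * diagonal ((↑) ∘ (√·) ∘ hA.1.eigenvalues) *
    (star hA.1.eigenvectorUnitary : Matrix n n 𝕜)

namespace BlockPSD


noncomputable def toE {k : ℕ} (x : Fin k → ℂ) : EuclideanSpace ℂ (Fin k) :=
  (WithLp.equiv 2 (Fin k → ℂ)).symm x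

lemma dot_eq_inner {k : ℕ} (x y : Fin k → ℂ) :
    star x ⬝ᵥ y = inner ℂ (toE x) (toE y) :=
  dotProduct_comm _ _

lemma dot_self_eq {k : ℕ} (x : Fin k → ℂ) :
    star x ⬝ᵥ x = ((‖toE x‖ ^ 2 : ℝ) : ℂ) := by
  rw [dot_eq_inner, inner_self_eq_norm_sq_to_K]; norm_cast

lemma re_dot_self_eq {k : ℕ} (x : Fin k → ℂ) :
    (star x ⬝ᵥ x).re = ‖toE x‖ ^ 2 := by
  rw [dot_self_eq, Complex.ofReal_re]

lemma star_sum_elim {k l : ℕ} (u : Fin k → ℂ) (v : Fin l → ℂ) :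
    star (Sum.elim u v) = Sum.elim (star u) (star v) := by
  funext x; cases x <;> rfl




lemma conj_dot {k l : ℕ} (B : Matrix (Fin k) (Fin l) ℂ) (u : Fin k → ℂ) (v : Fin l → ℂ) :
    star v ⬝ᵥ Bᴴ *ᵥ u = starRingEnd ℂ (star u ⬝ᵥ B *ᵥ v) := by
  have : starRingEnd ℂ (star u ⬝ᵥ B *ᵥ v) = star (star u ⬝ᵥ B *ᵥ v) := rfl
  rw [this, ← star_dotProduct_star, star_star, star_mulVec, dotProduct_mulVec]

/-- Key quadratic inequality for PSD block matrices. -/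
lemma key {k l : ℕ} {A : Matrix (Fin k) (Fin k) ℂ} {B : Matrix (Fin k) (Fin l) ℂ}
    {C : Matrix (Fin l) (Fin l) ℂ}
    (hM : (fromBlocks A B Bᴴ C).PosSemidef) (u : Fin k → ℂ) (v : Fin l → ℂ) :
    ‖star u ⬝ᵥ B *ᵥ v‖ ^ 2 ≤
      (star u ⬝ᵥ A *ᵥ u).re * (star v ⬝ᵥ C *ᵥ v).re := by
  set a : ℝ := (star u ⬝ᵥ A *ᵥ u).re with ha_def
  set c : ℝ := (star v ⬝ᵥ C *ᵥ v).re with hc_def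
  set b : ℂ := star u ⬝ᵥ B *ᵥ v with hb_def
  have ha : 0 ≤ a := by
    have h0 := hM.re_dotProduct_nonneg (Sum.elim u 0)
    rw [fromBlocks_mulVec, star_sum_elim, sumElim_dotProduct_sumElim] at h0
    simpa using h0
  have hc : 0 ≤ c := by
    have h0 := hM.re_dotProduct_nonneg (Sum.elim 0 v)
    rw [fromBlocks_mulVec, star_sum_elim, sumElim_dotProduct_sumElim] at h0
    simpa using h0
  have h : ∀ z : ℂ, 0 ≤ Complex.normSq z * a + 2 * (starRingEnd ℂ z * b).re + c := by
    intro z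
    have h0 := hM.re_dotProduct_nonneg (Sum.elim (z • u) v)
    rw [fromBlocks_mulVec, star_sum_elim, sumElim_dotProduct_sumElim,
      Sum.elim_comp_inl, Sum.elim_comp_inr, dotProduct_add, dotProduct_add] at h0
    have e1 : star (z • u) ⬝ᵥ A *ᵥ (z • u) = (Complex.normSq z : ℂ) * (star u ⬝ᵥ A *ᵥ u) := by
      rw [star_smul, mulVec_smul, smul_dotProduct, dotProduct_smul, smul_smul,
        Complex.normSq_eq_conj_mul_self]
      rfl
    have e2 : star (z • u) ⬝ᵥ B *ᵥ v = starRingEnd ℂ z * b := by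
      rw [star_smul, smul_dotProduct]; rfl
    have e3 : star v ⬝ᵥ Bᴴ *ᵥ (z • u) = z * starRingEnd ℂ b := by
      rw [mulVec_smul, dotProduct_smul, conj_dot]; rfl
    rw [e1, e2, e3] at h0
    have e4 : (z * starRingEnd ℂ b).re = (starRingEnd ℂ z * b).re := by
      rw [← Complex.conj_re (z * starRingEnd ℂ b)]
      simp [mul_comm]
    have e5 : ((Complex.normSq z : ℂ) * (star u ⬝ᵥ A *ᵥ u)).re = Complex.normSq z * a := by
      rw [Complex.re_ofReal_mul]
    simp only [RCLike.re_to_complex, Complex.add_re, e4, e5] at h0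
    convert h0 using 1
    ring
    -- now derive |b|^2 ≤ a * c
  have et : ∀ t : ℝ, (starRingEnd ℂ (t • b) * b).re = t * Complex.normSq b := by
    intro t
    rw [Complex.real_smul, _root_.map_mul, Complex.conj_ofReal, mul_assoc,
      ← Complex.normSq_eq_conj_mul_self, ← Complex.ofReal_mul]
    simp
  have ens : ∀ t : ℝ, Complex.normSq (t • b) = t ^ 2 * Complex.normSq b := by
    intro t
    simp [Complex.real_smul, Complex.normSq_mul, Complex.normSq_ofReal, sq]
  rcases eq_or_ne b 0 with hb | hb
  · simp [hb]; positivity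
  have hb2 : ‖b‖ ^ 2 = Complex.normSq b := Complex.sq_norm b
  rw [hb2]
  set q : ℝ := Complex.normSq b with hq_def
  have hnb : 0 < q := Complex.normSq_pos.mpr hb
  rcases eq_or_lt_of_le ha with haz | hap
  · exfalso
    have h1 := h ((-(c + 1) / (2 * q)) • b)
    rw [et, ens, ← haz] at h1
    have h2 : 2 * (-(c + 1) / (2 * q) * q) = -(c+1) := by field_simp
    rw [h2] at h1
    linarith
  · have h1 := h ((-(1 / a)) • b)
    rw [et, ens] at h1
    have h2 : (-(1 / a)) ^ 2 * q * a + 2 * (-(1 / a) * q) = -(q / a) := by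
      field_simp
      ring
    have h3 : q / a ≤ c := by linarith
    calc q = (q / a) * a := by field_simp
    _ ≤ c * a := by exact mul_le_mul_of_nonneg_right h3 (le_of_lt hap)
    _ = a * c := mul_comm _ _



variable {k : ℕ} {S : Matrix (Fin k) (Fin k) ℂ}

lemma UDU_mul (hS : S.IsHermitian) (d e : Fin k → ℂ) :
    ((hS.eigenvectorUnitary : Matrix (Fin k) (Fin k) ℂ) * diagonal d *
        (star hS.eigenvectorUnitary : Matrix (Fin k) (Fin k) ℂ)) *
      ((hS.eigenvectorUnitary : Matrix (Fin k) (Fin k) ℂ) * diagonal e *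
        (star hS.eigenvectorUnitary : Matrix (Fin k) (Fin k) ℂ)) =
    (hS.eigenvectorUnitary : Matrix (Fin k) (Fin k) ℂ) * diagonal (d * e) *
        (star hS.eigenvectorUnitary : Matrix (Fin k) (Fin k) ℂ) := by
  have h1 : (star hS.eigenvectorUnitary : Matrix (Fin k) (Fin k) ℂ) *
      (hS.eigenvectorUnitary : Matrix (Fin k) (Fin k) ℂ) = 1 :=
    (Matrix.mem_unitaryGroup_iff').mp hS.eigenvectorUnitary.2
  calc _ = (hS.eigenvectorUnitary : Matrix (Fin k) (Fin k) ℂ) * diagonal d *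
      ((star hS.eigenvectorUnitary : Matrix (Fin k) (Fin k) ℂ) *
        (hS.eigenvectorUnitary : Matrix (Fin k) (Fin k) ℂ)) * diagonal e *
      (star hS.eigenvectorUnitary : Matrix (Fin k) (Fin k) ℂ) := by
        simp only [Matrix.mul_assoc]
  _ = _ := by
        rw [h1, Matrix.mul_one,
          Matrix.mul_assoc (hS.eigenvectorUnitary : Matrix (Fin k) (Fin k) ℂ) (diagonal d)
            (diagonal e),
          diagonal_mul_diagonal]
        rfl

lemma star_real_fun (d : Fin k → ℝ) :
    (star fun i => ((d i : ℝ) : ℂ)) = fun i => ((d i : ℝ) : ℂ) :=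
  funext fun i => Complex.conj_ofReal _

lemma UDU_herm (hS : S.IsHermitian) (d : Fin k → ℝ) :
    ((hS.eigenvectorUnitary : Matrix (Fin k) (Fin k) ℂ) * diagonal (fun i => (d i : ℂ)) *
        (star hS.eigenvectorUnitary : Matrix (Fin k) (Fin k) ℂ)).IsHermitian := by
  unfold Matrix.IsHermitian
  simp only [conjTranspose_mul, diagonal_conjTranspose, star_eq_conjTranspose,
    conjTranspose_conjTranspose, Matrix.mul_assoc, star_real_fun]

/-- pseudoinverse of a PSD matrix -/
noncomputable def pinv (hS : S.PosSemidef) : Matrix (Fin k) (Fin k) ℂ :=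
  (hS.1.eigenvectorUnitary : Matrix (Fin k) (Fin k) ℂ) *
    diagonal (fun i => (((if hS.1.eigenvalues i = 0 then 0 else (hS.1.eigenvalues i)⁻¹ : ℝ)) : ℂ)) *
    (star hS.1.eigenvectorUnitary : Matrix (Fin k) (Fin k) ℂ)

/-- orthogonal projection onto the range of a PSD matrix -/
noncomputable def proj (hS : S.PosSemidef) : Matrix (Fin k) (Fin k) ℂ :=
  (hS.1.eigenvectorUnitary : Matrix (Fin k) (Fin k) ℂ) *
    diagonal (fun i => (((if hS.1.eigenvalues i = 0 then 0 else 1 : ℝ)) : ℂ)) *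
    (star hS.1.eigenvectorUnitary : Matrix (Fin k) (Fin k) ℂ)

lemma S_eq (hS : S.PosSemidef) : S =
    (hS.1.eigenvectorUnitary : Matrix (Fin k) (Fin k) ℂ) *
      diagonal (fun i => ((hS.1.eigenvalues i : ℝ) : ℂ)) *
      (star hS.1.eigenvectorUnitary : Matrix (Fin k) (Fin k) ℂ) :=
  hS.1.spectral_theorem

lemma sqrt_mul_self' (hS : S.PosSemidef) : hS.sqrt * hS.sqrt = S := by
  have e : (((RCLike.ofReal : ℝ → ℂ) ∘ (√·) ∘ hS.1.eigenvalues) *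
      ((RCLike.ofReal : ℝ → ℂ) ∘ (√·) ∘ hS.1.eigenvalues) : Fin k → ℂ)
      = fun i => (RCLike.ofReal (hS.1.eigenvalues i) : ℂ) := by
    funext i
    simp only [Pi.mul_apply, Function.comp_apply]
    rw [← RCLike.ofReal_mul, Real.mul_self_sqrt (hS.eigenvalues_nonneg i)]
  unfold Matrix.PosSemidef.sqrt
  rw [UDU_mul hS.1, e]
  exact (S_eq hS).symm

lemma sqrt_psd (hS : S.PosSemidef) : hS.sqrt.PosSemidef := by
  unfold Matrix.PosSemidef.sqrt
  have hD : (diagonal (((RCLike.ofReal : ℝ → ℂ) ∘ (√·) ∘ hS.1.eigenvalues) : Fin k → ℂ)).PosSemidef := by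
    rw [posSemidef_diagonal_iff]; intro i
    exact Complex.zero_le_real.mpr (Real.sqrt_nonneg _)
  have := hD.mul_mul_conjTranspose_same (hS.1.eigenvectorUnitary : Matrix (Fin k) (Fin k) ℂ)
  rw [star_eq_conjTranspose]
  exact this

lemma pinv_herm (hS : S.PosSemidef) : (pinv hS).IsHermitian := UDU_herm hS.1 _

lemma proj_herm (hS : S.PosSemidef) : (proj hS).IsHermitian := UDU_herm hS.1 _

lemma S_mul_pinv (hS : S.PosSemidef) : S * pinv hS = proj hS := by
  have h := UDU_mul hS.1 (fun i => ((hS.1.eigenvalues i : ℝ) : ℂ))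
    (fun i => (((if hS.1.eigenvalues i = 0 then 0 else (hS.1.eigenvalues i)⁻¹ : ℝ)) : ℂ))
  have e : (fun i => ((hS.1.eigenvalues i : ℝ) : ℂ)) *
      (fun i => (((if hS.1.eigenvalues i = 0 then 0 else (hS.1.eigenvalues i)⁻¹ : ℝ)) : ℂ))
      = fun i => (((if hS.1.eigenvalues i = 0 then 0 else 1 : ℝ)) : ℂ) := by
    funext i
    by_cases hi : hS.1.eigenvalues i = 0
    · simp [hi]
    · simp only [Pi.mul_apply, if_neg hi]
      rw [← Complex.ofReal_mul, mul_inv_cancel₀ hi]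
  rw [e] at h
  rw [← S_eq hS] at h
  exact h

lemma pinv_mul_S (hS : S.PosSemidef) : pinv hS * S = proj hS := by
  have h := UDU_mul hS.1
    (fun i => (((if hS.1.eigenvalues i = 0 then 0 else (hS.1.eigenvalues i)⁻¹ : ℝ)) : ℂ))
    (fun i => ((hS.1.eigenvalues i : ℝ) : ℂ))
  have e : (fun i => (((if hS.1.eigenvalues i = 0 then 0 else (hS.1.eigenvalues i)⁻¹ : ℝ)) : ℂ)) *
      (fun i => ((hS.1.eigenvalues i : ℝ) : ℂ))
      = fun i => (((if hS.1.eigenvalues i = 0 then 0 else 1 : ℝ)) : ℂ) := by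
    funext i
    by_cases hi : hS.1.eigenvalues i = 0
    · simp [hi]
    · simp only [Pi.mul_apply, if_neg hi]
      rw [← Complex.ofReal_mul, inv_mul_cancel₀ hi]
  rw [e] at h
  rw [← S_eq hS] at h
  exact h

lemma proj_idem (hS : S.PosSemidef) : proj hS * proj hS = proj hS := by
  have h := UDU_mul hS.1 (fun i => (((if hS.1.eigenvalues i = 0 then 0 else 1 : ℝ)) : ℂ))
    (fun i => (((if hS.1.eigenvalues i = 0 then 0 else 1 : ℝ)) : ℂ))
  have e : (fun i => (((if hS.1.eigenvalues i = 0 then 0 else 1 : ℝ)) : ℂ)) *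
      (fun i => (((if hS.1.eigenvalues i = 0 then 0 else 1 : ℝ)) : ℂ))
      = fun i => (((if hS.1.eigenvalues i = 0 then 0 else 1 : ℝ)) : ℂ) := by
    funext i
    by_cases hi : hS.1.eigenvalues i = 0 <;> simp [hi]
  rw [e] at h
  exact h

lemma S_mul_proj (hS : S.PosSemidef) : S * proj hS = S := by
  have h := UDU_mul hS.1 (fun i => ((hS.1.eigenvalues i : ℝ) : ℂ))
    (fun i => (((if hS.1.eigenvalues i = 0 then 0 else 1 : ℝ)) : ℂ))
  have e : (fun i => ((hS.1.eigenvalues i : ℝ) : ℂ)) *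
      (fun i => (((if hS.1.eigenvalues i = 0 then 0 else 1 : ℝ)) : ℂ))
      = fun i => ((hS.1.eigenvalues i : ℝ) : ℂ) := by
    funext i
    by_cases hi : hS.1.eigenvalues i = 0 <;> simp [hi]
  rw [e] at h
  rw [← S_eq hS] at h
  exact h

lemma dot_shift {p q : ℕ} (M : Matrix (Fin p) (Fin q) ℂ) (x : Fin p → ℂ) (y : Fin q → ℂ) :
    star x ⬝ᵥ (M *ᵥ y) = star (Mᴴ *ᵥ x) ⬝ᵥ y := by
  rw [star_mulVec, conjTranspose_conjTranspose, dotProduct_mulVec]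

lemma proj_contract (hS : S.PosSemidef) (x : Fin k → ℂ) :
    ‖toE (proj hS *ᵥ x)‖ ≤ ‖toE x‖ := by
  set P := proj hS with hP
  have hherm : Pᴴ = P := proj_herm hS
  have hidem : P * P = P := proj_idem hS
  have e1 : star (P *ᵥ x) ⬝ᵥ (P *ᵥ x) = star x ⬝ᵥ (P *ᵥ x) := by
    have h := dot_shift Pᴴ x (P *ᵥ x)
    rw [conjTranspose_conjTranspose] at h
    rw [← h, mulVec_mulVec, hherm, hidem]
  have hq : ((1 : Matrix (Fin k) (Fin k) ℂ) - P) * ((1 : Matrix (Fin k) (Fin k) ℂ) - P)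
      = 1 - P := by
    simp only [Matrix.sub_mul, Matrix.mul_sub, hidem, Matrix.one_mul, Matrix.mul_one]
    abel
  have hqh : ((1 : Matrix (Fin k) (Fin k) ℂ) - P)ᴴ = 1 - P := by
    rw [conjTranspose_sub, hherm, conjTranspose_one]
  have e2 : star ((1 - P) *ᵥ x) ⬝ᵥ ((1 - P) *ᵥ x) = star x ⬝ᵥ x - star x ⬝ᵥ (P *ᵥ x) := by
    have h := dot_shift ((1 - P)ᴴ) x ((1 - P) *ᵥ x)
    rw [conjTranspose_conjTranspose] at h
    rw [← h, hqh, mulVec_mulVec, hq, sub_mulVec, one_mulVec, dotProduct_sub]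
  have h1 : 0 ≤ (star ((1 - P) *ᵥ x) ⬝ᵥ ((1 - P) *ᵥ x)).re := by
    rw [re_dot_self_eq]; positivity
  rw [e2] at h1
  have h2 : (star x ⬝ᵥ (P *ᵥ x)).re ≤ (star x ⬝ᵥ x).re := by
    simp only [Complex.sub_re] at h1; linarith
  have h3 : ‖toE (P *ᵥ x)‖ ^ 2 ≤ ‖toE x‖ ^ 2 := by
    rw [← re_dot_self_eq, ← re_dot_self_eq, e1]; exact h2
  have h4 := Real.sqrt_le_sqrt h3
  rwa [Real.sqrt_sq (norm_nonneg _), Real.sqrt_sq (norm_nonneg _)] at h4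



lemma entry_eq {p q : ℕ} (N : Matrix (Fin p) (Fin q) ℂ) (i : Fin p) (j : Fin q) :
    star (Pi.single i 1) ⬝ᵥ (N *ᵥ Pi.single j 1) = N i j := by
  simp [mulVec_single, dotProduct, Pi.single_apply]

lemma opNorm_le_one {p q : ℕ} (Γ : Matrix (Fin p) (Fin q) ℂ)
    (h : ∀ x : Fin q → ℂ, ‖toE (Γ *ᵥ x)‖ ≤ ‖toE x‖) : ‖Γ‖ ≤ 1 := by
  rw [Matrix.l2_opNorm_def]
  refine ContinuousLinearMap.opNorm_le_bound _ zero_le_one fun x => ?_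
  rw [one_mul]
  have h2 := h ((WithLp.equiv 2 (Fin q → ℂ)) x)
  have e1 : toE ((WithLp.equiv 2 (Fin q → ℂ)) x) = x := (WithLp.equiv 2 _).symm_apply_apply x
  rw [e1] at h2
  exact h2

lemma mulVec_norm_le {p q : ℕ} (Γ : Matrix (Fin p) (Fin q) ℂ) (y : Fin q → ℂ) :
    ‖toE (Γ *ᵥ y)‖ ≤ ‖Γ‖ * ‖toE y‖ := by
  have := Matrix.l2_opNorm_mulVec Γ (toE y)
  convert this using 2
  rfl

lemma herm_dot_real {p : ℕ} {M : Matrix (Fin p) (Fin p) ℂ} (hM : M.IsHermitian)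
    (x : Fin p → ℂ) : (star x ⬝ᵥ M *ᵥ x).im = 0 := by
  rw [← Complex.conj_eq_iff_im]
  have h1 : star (star x ⬝ᵥ M *ᵥ x) = star x ⬝ᵥ M *ᵥ x := by
    rw [← star_dotProduct_star, star_star, star_mulVec, ← dotProduct_mulVec, hM]
  exact h1

lemma sq_norm_le {a b : ℝ} (ha : 0 ≤ a) (hb : 0 ≤ b) (h : a ^ 2 ≤ b ^ 2) : a ≤ b := by
  nlinarith

end BlockPSD

open BlockPSD

/-- For `A`, `C` positive semidefinite, the block matrix `[[A, B],[B*, C]]` is positive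
semidefinite iff `B = A^{1/2} Γ C^{1/2}` for some contraction `Γ` (operator norm `≤ 1`). -/
theorem stmt_1 (n m : ℕ) (A : Matrix (Fin n) (Fin n) ℂ) (C : Matrix (Fin m) (Fin m) ℂ)
    (hA : A.PosSemidef) (hC : C.PosSemidef) (B : Matrix (Fin n) (Fin m) ℂ) :
    (Matrix.fromBlocks A B Bᴴ C).PosSemidef ↔
      ∃ Γ : Matrix (Fin n) (Fin m) ℂ, ‖Γ‖ ≤ 1 ∧ B = hA.sqrt * Γ * hC.sqrt := by
  set S := hA.sqrt with hS_def
  set T := hC.sqrt with hT_def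
  have hS : S.PosSemidef := sqrt_psd hA
  have hT : T.PosSemidef := sqrt_psd hC
  have hSS : S * S = A := sqrt_mul_self' hA
  have hTT : T * T = C := sqrt_mul_self' hC
  constructor
  · -- hard direction
    intro hM
    set P := proj hS with hP_def
    set Q := proj hT with hQ_def
    set Γ := pinv hS * B * pinv hT with hΓ_def
    -- A * (1 - P) = 0
    have fA : A * (1 - P) = 0 := by
      have h1 : A * P = A := by
        rw [← hSS, Matrix.mul_assoc, S_mul_proj hS]
      rw [Matrix.mul_sub, Matrix.mul_one, h1, sub_self]
    have fC : C * (1 - Q) = 0 := by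
      have h1 : C * Q = C := by
        rw [← hTT, Matrix.mul_assoc, S_mul_proj hT]
      rw [Matrix.mul_sub, Matrix.mul_one, h1, sub_self]
    -- P * B = B
    have fPB : P * B = B := by
      have hz : ((1 : Matrix (Fin n) (Fin n) ℂ) - P) * B = 0 := by
        ext i j
        have e0 : (((1 : Matrix (Fin n) (Fin n) ℂ) - P) * B) i j
            = star ((1 - P) *ᵥ Pi.single i 1) ⬝ᵥ (B *ᵥ Pi.single j 1) := by
          rw [← entry_eq (((1 : Matrix (Fin n) (Fin n) ℂ) - P) * B) i j, ← mulVec_mulVec, dot_shift,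
            (by rw [conjTranspose_sub, conjTranspose_one, (proj_herm hS).eq] :
              ((1 : Matrix (Fin n) (Fin n) ℂ) - P)ᴴ = 1 - P)]
        set u : Fin n → ℂ := (1 - P) *ᵥ Pi.single i 1 with hu
        have hAu : A *ᵥ u = 0 := by
          rw [hu, mulVec_mulVec, fA, zero_mulVec]
        have hk := key hM u (Pi.single j 1)
        rw [hAu, dotProduct_zero] at hk
        simp only [Complex.zero_re, zero_mul] at hk
        have habs : ‖star u ⬝ᵥ B *ᵥ Pi.single j 1‖ = 0 := by
          nlinarith [norm_nonneg (star u ⬝ᵥ B *ᵥ Pi.single j 1)]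
        have : star u ⬝ᵥ B *ᵥ Pi.single j 1 = 0 := by
          exact norm_eq_zero.mp habs
        rw [e0, this]
        rfl
      have h2 := sub_eq_zero.mp (by rwa [Matrix.sub_mul, Matrix.one_mul] at hz)
      exact h2.symm
    -- B * Q = B
    have fBQ : B * Q = B := by
      have hz : B * ((1 : Matrix (Fin m) (Fin m) ℂ) - Q) = 0 := by
        ext i j
        have e0 : (B * ((1 : Matrix (Fin m) (Fin m) ℂ) - Q)) i j
            = star (Pi.single i 1) ⬝ᵥ (B *ᵥ ((1 - Q) *ᵥ Pi.single j 1)) := by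
          rw [← entry_eq (B * ((1 : Matrix (Fin m) (Fin m) ℂ) - Q)) i j, ← mulVec_mulVec]
        set v : Fin m → ℂ := (1 - Q) *ᵥ Pi.single j 1 with hv
        have hCv : C *ᵥ v = 0 := by
          rw [hv, mulVec_mulVec, fC, zero_mulVec]
        have hk := key hM (Pi.single i 1) v
        rw [hCv, dotProduct_zero] at hk
        simp only [Complex.zero_re, mul_zero] at hk
        have habs : ‖star (Pi.single i 1) ⬝ᵥ B *ᵥ v‖ = 0 := by
          nlinarith [norm_nonneg (star (Pi.single i 1) ⬝ᵥ B *ᵥ v)]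
        have : star (Pi.single i 1) ⬝ᵥ B *ᵥ v = 0 := norm_eq_zero.mp habs
        rw [e0, this]
        rfl
      have h2 := sub_eq_zero.mp (by rwa [Matrix.mul_sub, Matrix.mul_one] at hz)
      exact h2.symm
    -- B = S * Γ * T
    have hfact : S * Γ * T = B := by
      calc S * Γ * T = (S * pinv hS) * B * (pinv hT * T) := by
            rw [hΓ_def]; simp only [Matrix.mul_assoc]
      _ = P * B * Q := by rw [S_mul_pinv hS, pinv_mul_S hT]
      _ = B := by rw [fPB, fBQ]
    refine ⟨Γ, ?_, hfact.symm⟩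
    -- norm bound
    apply opNorm_le_one
    intro x
    have hweq : Γ *ᵥ x = pinv hS *ᵥ ((B * pinv hT) *ᵥ x) := by
      rw [hΓ_def, Matrix.mul_assoc, ← mulVec_mulVec]
    have hq : star (Γ *ᵥ x) ⬝ᵥ (Γ *ᵥ x)
        = star (pinv hS *ᵥ (Γ *ᵥ x)) ⬝ᵥ (B *ᵥ (pinv hT *ᵥ x)) := by
      calc star (Γ *ᵥ x) ⬝ᵥ (Γ *ᵥ x)
          = star (Γ *ᵥ x) ⬝ᵥ (pinv hS *ᵥ ((B * pinv hT) *ᵥ x)) := by rw [← hweq]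
      _ = star ((pinv hS)ᴴ *ᵥ (Γ *ᵥ x)) ⬝ᵥ ((B * pinv hT) *ᵥ x) := dot_shift _ _ _
      _ = star (pinv hS *ᵥ (Γ *ᵥ x)) ⬝ᵥ (B *ᵥ (pinv hT *ᵥ x)) := by
            rw [(pinv_herm hS).eq, mulVec_mulVec x B (pinv hT)]
    have h1 : (star (pinv hS *ᵥ (Γ *ᵥ x)) ⬝ᵥ A *ᵥ (pinv hS *ᵥ (Γ *ᵥ x))).re
        = ‖toE (P *ᵥ (Γ *ᵥ x))‖ ^ 2 := by
      have e1 : A *ᵥ (pinv hS *ᵥ (Γ *ᵥ x)) = S *ᵥ (S *ᵥ (pinv hS *ᵥ (Γ *ᵥ x))) := by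
        rw [mulVec_mulVec _ S S, hSS]
      have e2 : S *ᵥ (pinv hS *ᵥ (Γ *ᵥ x)) = P *ᵥ (Γ *ᵥ x) := by
        rw [mulVec_mulVec, S_mul_pinv hS, hP_def]
      rw [e1, dot_shift, hS.1.eq, e2, re_dot_self_eq]
    have h2 : (star (pinv hT *ᵥ x) ⬝ᵥ C *ᵥ (pinv hT *ᵥ x)).re = ‖toE (Q *ᵥ x)‖ ^ 2 := by
      have e1 : C *ᵥ (pinv hT *ᵥ x) = T *ᵥ (T *ᵥ (pinv hT *ᵥ x)) := by
        rw [mulVec_mulVec _ T T, hTT]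
      have e2 : T *ᵥ (pinv hT *ᵥ x) = Q *ᵥ x := by
        rw [mulVec_mulVec, S_mul_pinv hT, hQ_def]
      rw [e1, dot_shift, hT.1.eq, e2, re_dot_self_eq]
    have hk := key hM (pinv hS *ᵥ (Γ *ᵥ x)) (pinv hT *ᵥ x)
    rw [← hq, h1, h2, dot_self_eq] at hk
    rw [Complex.norm_real, Real.norm_eq_abs,
      _root_.abs_of_nonneg (by positivity : (0:ℝ) ≤ ‖toE (Γ *ᵥ x)‖ ^ 2)] at hk
    have hP2 : ‖toE (P *ᵥ (Γ *ᵥ x))‖ ^ 2 ≤ ‖toE (Γ *ᵥ x)‖ ^ 2 := by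
      have := proj_contract hS (Γ *ᵥ x)
      nlinarith [norm_nonneg (toE (P *ᵥ (Γ *ᵥ x))), norm_nonneg (toE (Γ *ᵥ x))]
    have hQ2 : ‖toE (Q *ᵥ x)‖ ^ 2 ≤ ‖toE x‖ ^ 2 := by
      have := proj_contract hT x
      nlinarith [norm_nonneg (toE (Q *ᵥ x)), norm_nonneg (toE x)]
    apply sq_norm_le (norm_nonneg _) (norm_nonneg _)
    have h4 : (‖toE (Γ *ᵥ x)‖ ^ 2) ^ 2 ≤ ‖toE (Γ *ᵥ x)‖ ^ 2 * ‖toE x‖ ^ 2 := by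
      calc (‖toE (Γ *ᵥ x)‖ ^ 2) ^ 2
          ≤ ‖toE (P *ᵥ (Γ *ᵥ x))‖ ^ 2 * ‖toE (Q *ᵥ x)‖ ^ 2 := hk
      _ ≤ ‖toE (Γ *ᵥ x)‖ ^ 2 * ‖toE x‖ ^ 2 := by
          apply mul_le_mul hP2 hQ2 (by positivity) (by positivity)
    nlinarith [norm_nonneg (toE (Γ *ᵥ x)), norm_nonneg (toE x), sq_nonneg (‖toE (Γ *ᵥ x)‖^2)]
  · -- easy direction
    rintro ⟨Γ, hΓnorm, rfl⟩
    apply Matrix.PosSemidef.of_dotProduct_mulVec_nonneg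
    · -- Hermitian
      unfold Matrix.IsHermitian
      rw [fromBlocks_conjTranspose, hA.1.eq, hC.1.eq, conjTranspose_conjTranspose]
    · intro x
      set u : Fin n → ℂ := x ∘ Sum.inl with hu
      set v : Fin m → ℂ := x ∘ Sum.inr with hv
      have hx : Sum.elim u v = x := Sum.elim_comp_inl_inr x
      rw [← hx, fromBlocks_mulVec, star_sum_elim, sumElim_dotProduct_sumElim,
        Sum.elim_comp_inl, Sum.elim_comp_inr, dotProduct_add, dotProduct_add]
      set M := S * Γ * T with hM_def
      have e1 : star u ⬝ᵥ A *ᵥ u = star (S *ᵥ u) ⬝ᵥ (S *ᵥ u) := by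
        conv_lhs => rw [← hSS]
        rw [← mulVec_mulVec, dot_shift, hS.1.eq]
      have e2 : star v ⬝ᵥ C *ᵥ v = star (T *ᵥ v) ⬝ᵥ (T *ᵥ v) := by
        conv_lhs => rw [← hTT]
        rw [← mulVec_mulVec, dot_shift, hT.1.eq]
      have e3 : star u ⬝ᵥ M *ᵥ v = star (S *ᵥ u) ⬝ᵥ (Γ *ᵥ (T *ᵥ v)) := by
        rw [hM_def, ← mulVec_mulVec, ← mulVec_mulVec, dot_shift, hS.1.eq]
      have e4 : star v ⬝ᵥ Mᴴ *ᵥ u = starRingEnd ℂ (star u ⬝ᵥ M *ᵥ v) := conj_dot M u v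
      -- realness
      have him : (star u ⬝ᵥ A *ᵥ u + star u ⬝ᵥ M *ᵥ v +
          (star v ⬝ᵥ Mᴴ *ᵥ u + star v ⬝ᵥ C *ᵥ v)).im = 0 := by
        have i1 : (star u ⬝ᵥ A *ᵥ u).im = 0 := herm_dot_real hA.1 u
        have i2 : (star v ⬝ᵥ C *ᵥ v).im = 0 := herm_dot_real hC.1 v
        have i3 : (star u ⬝ᵥ M *ᵥ v).im + (star v ⬝ᵥ Mᴴ *ᵥ u).im = 0 := by
          rw [e4, Complex.conj_im]; ring
        simp only [Complex.add_im]
        linarith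
      have hre : 0 ≤ (star u ⬝ᵥ A *ᵥ u + star u ⬝ᵥ M *ᵥ v +
          (star v ⬝ᵥ Mᴴ *ᵥ u + star v ⬝ᵥ C *ᵥ v)).re := by
        have r1 : (star u ⬝ᵥ A *ᵥ u).re = ‖toE (S *ᵥ u)‖ ^ 2 := by
          rw [e1, re_dot_self_eq]
        have r2 : (star v ⬝ᵥ C *ᵥ v).re = ‖toE (T *ᵥ v)‖ ^ 2 := by
          rw [e2, re_dot_self_eq]
        have r3 : (star v ⬝ᵥ Mᴴ *ᵥ u).re = (star u ⬝ᵥ M *ᵥ v).re := by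
          rw [e4, Complex.conj_re]
        have r4 : |(star u ⬝ᵥ M *ᵥ v).re| ≤ ‖toE (S *ᵥ u)‖ * ‖toE (T *ᵥ v)‖ := by
          have c1 : ‖star u ⬝ᵥ M *ᵥ v‖ ≤ ‖toE (S *ᵥ u)‖ * ‖toE (T *ᵥ v)‖ := by
            rw [e3, dot_eq_inner]
            calc ‖inner ℂ (toE (S *ᵥ u)) (toE (Γ *ᵥ (T *ᵥ v)))‖
                = ‖(inner ℂ (toE (S *ᵥ u)) (toE (Γ *ᵥ (T *ᵥ v))) : ℂ)‖ := rfl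
            _ ≤ ‖toE (S *ᵥ u)‖ * ‖toE (Γ *ᵥ (T *ᵥ v))‖ := norm_inner_le_norm _ _
            _ ≤ ‖toE (S *ᵥ u)‖ * (‖Γ‖ * ‖toE (T *ᵥ v)‖) := by
                apply mul_le_mul_of_nonneg_left (mulVec_norm_le Γ _) (norm_nonneg _)
            _ ≤ ‖toE (S *ᵥ u)‖ * (1 * ‖toE (T *ᵥ v)‖) := by
                apply mul_le_mul_of_nonneg_left
                  (mul_le_mul_of_nonneg_right hΓnorm (norm_nonneg _)) (norm_nonneg _)
            _ = ‖toE (S *ᵥ u)‖ * ‖toE (T *ᵥ v)‖ := by rw [one_mul]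
          exact le_trans (Complex.abs_re_le_norm _) c1
        simp only [Complex.add_re, r1, r2, r3]
        have hr := abs_le.mp r4
        nlinarith [norm_nonneg (toE (S *ᵥ u)), norm_nonneg (toE (T *ᵥ v)),
          sq_nonneg (‖toE (S *ᵥ u)‖ - ‖toE (T *ᵥ v)‖)]
      rw [Complex.le_def]
      constructor
      · simpa using hre
      · simpa using him.symm
end

section
/- Let S = [S_{kj}]_{k,j=1}^3 be a Hermitian 3×3 complex matrix with strictly positive diagonal entries S_{kk} > 0. Then S is positive semidefinite if and only if there exist complex numbers Γ_{12}, Γ_{23}, Γ_{13}, each of modulus at most 1, such that S_{12} = S_{11}^{1/2} Γ_{12} S_{22}^{1/2}, S_{23} = S_{22}^{1/2} Γ_{23} S_{33}^{1/2}, and S_{13} = S_{11}^{1/2} (Γ_{12}Γ_{23} + (1−|Γ_{12}|²)^{1/2} Γ_{13} (1−|Γ_{23}|²)^{1/2}) S_{33}^{1/2}. Moreover, Γ_{12} and Γ_{23} are uniquely determined, and if in addition |Γ_{12}| < 1 and |Γ_{23}| < 1 then Γ_{13} is uniquely determined. -/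
open Complex Matrix
open scoped ComplexOrder

lemma det_re_nonneg' {n : ℕ} {M : Matrix (Fin n) (Fin n) ℂ} (h : M.PosSemidef) :
    0 ≤ M.det.re := by
  have h2 : M.det = ((∏ i, h.1.eigenvalues i : ℝ) : ℂ) := by
    rw [h.1.det_eq_prod_eigenvalues]; push_cast; rfl
  rw [h2, Complex.ofReal_re]
  exact Finset.prod_nonneg fun i _ => h.eigenvalues_nonneg i

lemma defect_sq (g : ℂ) (hg : ‖g‖ ≤ 1) :
    ((Real.sqrt (1 - ‖g‖ ^ 2) : ℝ) : ℂ) ^ 2 = 1 - g * (starRingEnd ℂ) g := by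
  have h0 : (0:ℝ) ≤ 1 - ‖g‖ ^ 2 := by nlinarith [norm_nonneg g]
  have h1 : (Real.sqrt (1 - ‖g‖ ^ 2)) ^ 2 = 1 - ‖g‖ ^ 2 :=
    Real.sq_sqrt h0
  calc ((Real.sqrt (1 - ‖g‖ ^ 2) : ℝ) : ℂ) ^ 2
      = (((Real.sqrt (1 - ‖g‖ ^ 2)) ^ 2 : ℝ) : ℂ) := by push_cast; ring
    _ = ((1 - ‖g‖ ^ 2 : ℝ) : ℂ) := by rw [h1]
    _ = 1 - g * (starRingEnd ℂ) g := by
        rw [Complex.mul_conj, ← Complex.normSq_eq_norm_sq]; push_cast; ring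

set_option maxHeartbeats 2000000 in
/-- Schur-type parametrization of positive semidefinite 3×3 Hermitian matrices with
strictly positive diagonal, together with the uniqueness of the parameters. -/
theorem stmt_2 (S : Matrix (Fin 3) (Fin 3) ℂ) (hHerm : S.IsHermitian)
    (hdiag : ∀ k, 0 < (S k k).re) :
    (S.PosSemidef ↔
      ∃ Γ₁₂ Γ₂₃ Γ₁₃ : ℂ,
        ‖Γ₁₂‖ ≤ 1 ∧ ‖Γ₂₃‖ ≤ 1 ∧ ‖Γ₁₃‖ ≤ 1 ∧
        S 0 1 = (Real.sqrt (S 0 0).re : ℂ) * Γ₁₂ * (Real.sqrt (S 1 1).re : ℂ) ∧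
        S 1 2 = (Real.sqrt (S 1 1).re : ℂ) * Γ₂₃ * (Real.sqrt (S 2 2).re : ℂ) ∧
        S 0 2 = (Real.sqrt (S 0 0).re : ℂ) *
          (Γ₁₂ * Γ₂₃ + (Real.sqrt (1 - ‖Γ₁₂‖ ^ 2) : ℂ) * Γ₁₃ *
            (Real.sqrt (1 - ‖Γ₂₃‖ ^ 2) : ℂ)) * (Real.sqrt (S 2 2).re : ℂ)) ∧
    (∀ Γ₁₂ Γ₂₃ Γ₁₃ Γ₁₂' Γ₂₃' Γ₁₃' : ℂ,
      (‖Γ₁₂‖ ≤ 1 ∧ ‖Γ₂₃‖ ≤ 1 ∧ ‖Γ₁₃‖ ≤ 1 ∧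
        S 0 1 = (Real.sqrt (S 0 0).re : ℂ) * Γ₁₂ * (Real.sqrt (S 1 1).re : ℂ) ∧
        S 1 2 = (Real.sqrt (S 1 1).re : ℂ) * Γ₂₃ * (Real.sqrt (S 2 2).re : ℂ) ∧
        S 0 2 = (Real.sqrt (S 0 0).re : ℂ) *
          (Γ₁₂ * Γ₂₃ + (Real.sqrt (1 - ‖Γ₁₂‖ ^ 2) : ℂ) * Γ₁₃ *
            (Real.sqrt (1 - ‖Γ₂₃‖ ^ 2) : ℂ)) * (Real.sqrt (S 2 2).re : ℂ)) →
      (‖Γ₁₂'‖ ≤ 1 ∧ ‖Γ₂₃'‖ ≤ 1 ∧ ‖Γ₁₃'‖ ≤ 1 ∧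
        S 0 1 = (Real.sqrt (S 0 0).re : ℂ) * Γ₁₂' * (Real.sqrt (S 1 1).re : ℂ) ∧
        S 1 2 = (Real.sqrt (S 1 1).re : ℂ) * Γ₂₃' * (Real.sqrt (S 2 2).re : ℂ) ∧
        S 0 2 = (Real.sqrt (S 0 0).re : ℂ) *
          (Γ₁₂' * Γ₂₃' + (Real.sqrt (1 - ‖Γ₁₂'‖ ^ 2) : ℂ) * Γ₁₃' *
            (Real.sqrt (1 - ‖Γ₂₃'‖ ^ 2) : ℂ)) * (Real.sqrt (S 2 2).re : ℂ)) →
      Γ₁₂ = Γ₁₂' ∧ Γ₂₃ = Γ₂₃' ∧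
        (‖Γ₁₂‖ < 1 → ‖Γ₂₃‖ < 1 → Γ₁₃ = Γ₁₃')) := by
  set a := Real.sqrt (S 0 0).re with ha_def
  set b := Real.sqrt (S 1 1).re with hb_def
  set c := Real.sqrt (S 2 2).re with hc_def
  have ha : 0 < a := Real.sqrt_pos.mpr (hdiag 0)
  have hb : 0 < b := Real.sqrt_pos.mpr (hdiag 1)
  have hc : 0 < c := Real.sqrt_pos.mpr (hdiag 2)
  have ha0 : (a:ℂ) ≠ 0 := by exact_mod_cast ha.ne'
  have hb0 : (b:ℂ) ≠ 0 := by exact_mod_cast hb.ne'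
  have hc0 : (c:ℂ) ≠ 0 := by exact_mod_cast hc.ne'
  have hdr : ∀ k, S k k = (((S k k).re : ℝ) : ℂ) := by
    intro k
    exact (Complex.conj_eq_iff_re.mp (hHerm.apply k k)).symm
  have hA : S 0 0 = ((a:ℂ))^2 := by
    rw [hdr 0, ha_def]; norm_cast; rw [Real.sq_sqrt (hdiag 0).le]
  have hB : S 1 1 = ((b:ℂ))^2 := by
    rw [hdr 1, hb_def]; norm_cast; rw [Real.sq_sqrt (hdiag 1).le]
  have hC : S 2 2 = ((c:ℂ))^2 := by
    rw [hdr 2, hc_def]; norm_cast; rw [Real.sq_sqrt (hdiag 2).le]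
  have hs10 : S 1 0 = (starRingEnd ℂ) (S 0 1) := (hHerm.apply 1 0).symm
  have hs20 : S 2 0 = (starRingEnd ℂ) (S 0 2) := (hHerm.apply 2 0).symm
  have hs21 : S 2 1 = (starRingEnd ℂ) (S 1 2) := (hHerm.apply 2 1).symm
  refine ⟨⟨?_, ?_⟩, ?_⟩
  · -- forward: PSD → ∃
    intro hPSD
    set r12 : ℂ := S 0 1 / ((a:ℂ)*(b:ℂ)) with hr12
    set r23 : ℂ := S 1 2 / ((b:ℂ)*(c:ℂ)) with hr23
    set r13 : ℂ := S 0 2 / ((a:ℂ)*(c:ℂ)) with hr13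
    have hE1 : S 0 1 = (a:ℂ) * r12 * (b:ℂ) := by rw [hr12]; field_simp
    have hE2 : S 1 2 = (b:ℂ) * r23 * (c:ℂ) := by rw [hr23]; field_simp
    have hE3 : S 0 2 = (a:ℂ) * r13 * (c:ℂ) := by rw [hr13]; field_simp
    have hE1c : S 1 0 = (a:ℂ) * (starRingEnd ℂ) r12 * (b:ℂ) := by
      rw [hs10, hE1]; simp [_root_.map_mul, Complex.conj_ofReal]
    have hE2c : S 2 1 = (b:ℂ) * (starRingEnd ℂ) r23 * (c:ℂ) := by
      rw [hs21, hE2]; simp [_root_.map_mul, Complex.conj_ofReal]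
    have hE3c : S 2 0 = (a:ℂ) * (starRingEnd ℂ) r13 * (c:ℂ) := by
      rw [hs20, hE3]; simp [_root_.map_mul, Complex.conj_ofReal]
    -- 2x2 minors
    have minor : ∀ (i j : Fin 3), i ≠ j → 0 ≤ (S i i * S j j - S i j * S j i).re := by
      intro i j hij
      have hsub := hPSD.submatrix ![i, j]
      have h := det_re_nonneg' hsub
      have hdet : (S.submatrix ![i,j] ![i,j]).det = S i i * S j j - S i j * S j i := by
        rw [Matrix.det_fin_two]; simp [Matrix.submatrix_apply]
      rwa [hdet] at h
    have habs : ∀ (i j : Fin 3) (u v : ℝ), i ≠ j → S i i = ((u:ℝ):ℂ)^2 → S j j = ((v:ℝ):ℂ)^2 →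
        S j i = (starRingEnd ℂ) (S i j) → Complex.normSq (S i j) ≤ u^2 * v^2 := by
      intro i j u v hij hu hv hc'
      have h := minor i j hij
      have heq : S i i * S j j - S i j * S j i = (((u^2*v^2 - Complex.normSq (S i j) : ℝ)) : ℂ) := by
        rw [hu, hv, hc', Complex.mul_conj]; push_cast; ring
      rw [heq, Complex.ofReal_re] at h
      linarith
    have n12 : Complex.normSq (S 0 1) ≤ a^2 * b^2 :=
      habs 0 1 a b (by decide) hA hB hs10
    have n23 : Complex.normSq (S 1 2) ≤ b^2 * c^2 :=
      habs 1 2 b c (by decide) hB hC hs21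
    have habs_r : ∀ (z : ℂ) (u v : ℝ), 0 < u → 0 < v → Complex.normSq z ≤ u^2*v^2 →
        ‖z / ((u:ℂ)*(v:ℂ))‖ ≤ 1 := by
      intro z u v hu hv hn
      rw [norm_div, norm_mul, Complex.norm_real, Complex.norm_real, Real.norm_eq_abs, Real.norm_eq_abs,
        abs_of_pos hu, abs_of_pos hv, div_le_one (by positivity)]
      have h1 : ‖z‖ ^ 2 = Complex.normSq z := Complex.sq_norm z
      nlinarith [norm_nonneg z, mul_pos hu hv]
    have m12 : ‖r12‖ ≤ 1 := habs_r _ a b ha hb n12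
    have m23 : ‖r23‖ ≤ 1 := habs_r _ b c hb hc n23
    -- determinant
    have hdet3 : 0 ≤ S.det.re := det_re_nonneg' hPSD
    have hn1 : ((Complex.normSq r12 : ℝ) : ℂ) = r12 * (starRingEnd ℂ) r12 := (Complex.mul_conj r12).symm
    have hn2 : ((Complex.normSq r23 : ℝ) : ℂ) = r23 * (starRingEnd ℂ) r23 := (Complex.mul_conj r23).symm
    have hn3 : ((Complex.normSq (r13 - r12*r23) : ℝ) : ℂ) =
        (r13 - r12*r23) * ((starRingEnd ℂ) r13 - (starRingEnd ℂ) r12 * (starRingEnd ℂ) r23) := by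
      rw [← Complex.mul_conj]; simp [map_sub, _root_.map_mul]
    have hdetval : S.det = ((a^2*b^2*c^2 *
        ((1 - Complex.normSq r12) * (1 - Complex.normSq r23)
          - Complex.normSq (r13 - r12*r23)) : ℝ) : ℂ) := by
      rw [Matrix.det_fin_three, hA, hB, hC, hE1, hE1c, hE2, hE2c, hE3, hE3c]
      push_cast [hn1, hn2, hn3]
      ring
    have hQ : 0 ≤ (1 - Complex.normSq r12) * (1 - Complex.normSq r23)
        - Complex.normSq (r13 - r12*r23) := by
      rw [hdetval, Complex.ofReal_re] at hdet3
      have hP : 0 < a^2*b^2*c^2 := by positivity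
      nlinarith [hdet3, hP]
    set d12 := Real.sqrt (1 - ‖r12‖ ^ 2) with hd12
    set d23 := Real.sqrt (1 - ‖r23‖ ^ 2) with hd23
    have hd12sq : d12^2 = 1 - Complex.normSq r12 := by
      rw [hd12, Real.sq_sqrt (by nlinarith [norm_nonneg r12]), Complex.sq_norm]
    have hd23sq : d23^2 = 1 - Complex.normSq r23 := by
      rw [hd23, Real.sq_sqrt (by nlinarith [norm_nonneg r23]), Complex.sq_norm]
    have hd12n : 0 ≤ d12 := Real.sqrt_nonneg _
    have hd23n : 0 ≤ d23 := Real.sqrt_nonneg _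
    have hw : ‖r13 - r12*r23‖ ≤ d12 * d23 := by
      have h2 : (‖r13 - r12*r23‖)^2 ≤ (d12*d23)^2 := by
        rw [Complex.sq_norm]
        calc Complex.normSq (r13 - r12*r23)
            ≤ (1 - Complex.normSq r12) * (1 - Complex.normSq r23) := by linarith
          _ = d12^2 * d23^2 := by rw [hd12sq, hd23sq]
          _ = (d12*d23)^2 := by ring
      exact le_of_pow_le_pow_left₀ two_ne_zero (mul_nonneg hd12n hd23n) h2
    by_cases hz : d12 * d23 = 0
    · -- degenerate: r13 = r12 * r23
      have hw0 : r13 - r12*r23 = 0 := by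
        have : ‖r13 - r12*r23‖ = 0 := le_antisymm (hz ▸ hw) (norm_nonneg _)
        exact norm_eq_zero.mp this
      refine ⟨r12, r23, 0, m12, m23, by simp, hE1, hE2, ?_⟩
      rw [hE3]
      have : r13 = r12 * r23 := by linear_combination hw0
      rw [this]; ring
    · -- nondegenerate
      have hd12z : d12 ≠ 0 := fun h => hz (by rw [h, zero_mul])
      have hd23z : d23 ≠ 0 := fun h => hz (by rw [h, mul_zero])
      have hd12p : 0 < d12 := lt_of_le_of_ne hd12n (Ne.symm hd12z)
      have hd23p : 0 < d23 := lt_of_le_of_ne hd23n (Ne.symm hd23z)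
      refine ⟨r12, r23, (r13 - r12*r23) / ((d12:ℂ)*(d23:ℂ)), m12, m23, ?_, hE1, hE2, ?_⟩
      · rw [norm_div, norm_mul, Complex.norm_real, Complex.norm_real, Real.norm_eq_abs, Real.norm_eq_abs,
          abs_of_pos hd12p, abs_of_pos hd23p, div_le_one (by positivity)]
        exact hw
      · rw [hE3]
        have hne : ((d12:ℝ):ℂ) * ((d23:ℝ):ℂ) ≠ 0 := by
          simp [Complex.ofReal_ne_zero, hd12z, hd23z]
        have : (d12:ℂ) * ((r13 - r12*r23) / ((d12:ℂ)*(d23:ℂ))) * (d23:ℂ) = r13 - r12*r23 := by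
          field_simp
        rw [this]; ring
  · -- reverse: ∃ → PSD
    rintro ⟨g12, g23, g13, m12, m23, m13, e1, e2, e3⟩
    set d12 := Real.sqrt (1 - ‖g12‖ ^ 2) with hd12_def
    set d23 := Real.sqrt (1 - ‖g23‖ ^ 2) with hd23_def
    set dg := Real.sqrt (1 - ‖g13‖ ^ 2) with hdg_def
    have h12 : ((d12:ℝ):ℂ)^2 = 1 - g12 * (starRingEnd ℂ) g12 := defect_sq g12 m12
    have h23 : ((d23:ℝ):ℂ)^2 = 1 - g23 * (starRingEnd ℂ) g23 := defect_sq g23 m23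
    have hg : ((dg:ℝ):ℂ)^2 = 1 - g13 * (starRingEnd ℂ) g13 := defect_sq g13 m13
    set M : Matrix (Fin 3) (Fin 3) ℂ :=
      !![(a:ℂ), 0, 0;
         (b:ℂ) * (starRingEnd ℂ) g12, (b:ℂ) * (d12:ℂ), 0;
         (c:ℂ) * (starRingEnd ℂ) (g12*g23 + (d12:ℂ)*g13*(d23:ℂ)),
           (c:ℂ) * ((d12:ℂ) * (starRingEnd ℂ) g23 - g12 * (starRingEnd ℂ) g13 * (d23:ℂ)),
           (c:ℂ) * ((d23:ℂ) * (dg:ℂ))] with hM_def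
    have e1c : (starRingEnd ℂ) (S 0 1) = (a:ℂ) * (starRingEnd ℂ) g12 * (b:ℂ) := by
      rw [e1]; simp [_root_.map_mul, Complex.conj_ofReal]
    have e2c : (starRingEnd ℂ) (S 1 2) = (b:ℂ) * (starRingEnd ℂ) g23 * (c:ℂ) := by
      rw [e2]; simp [_root_.map_mul, Complex.conj_ofReal]
    have e3c : (starRingEnd ℂ) (S 0 2) = (a:ℂ) *
        ((starRingEnd ℂ) g12 * (starRingEnd ℂ) g23 +
          (d12:ℂ) * (starRingEnd ℂ) g13 * (d23:ℂ)) * (c:ℂ) := by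
      rw [e3]; simp [_root_.map_mul, map_add, Complex.conj_ofReal]
    have hfact : S = M * Mᴴ := by
      ext i j
      fin_cases i <;> fin_cases j <;>
        simp [hM_def, Matrix.mul_apply, Fin.sum_univ_three, Matrix.conjTranspose_apply,
          Complex.conj_ofReal]
      · linear_combination hA
      · linear_combination e1
      · linear_combination e3
      · linear_combination hs10 + e1c
      · linear_combination hB - (b:ℂ)^2 * h12
      · linear_combination e2 - (b:ℂ)*(c:ℂ)*g23*h12
      · linear_combination hs20 + e3c
      · linear_combination hs21 + e2c - (b:ℂ)*(c:ℂ)*(starRingEnd ℂ) g23 * h12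
      · linear_combination hC - (c:ℂ)^2*((g23*(starRingEnd ℂ) g23 + g13*(starRingEnd ℂ) g13*((d23:ℂ))^2)*h12 + h23 + ((d23:ℂ))^2*hg)
    rw [hfact]
    exact Matrix.posSemidef_self_mul_conjTranspose M
  · -- uniqueness
    rintro g12 g23 g13 g12' g23' g13' ⟨m12, m23, m13, e1, e2, e3⟩ ⟨m12', m23', m13', e1', e2', e3'⟩
    have h1 : g12 = g12' := by
      have h := e1.symm.trans e1'
      exact mul_left_cancel₀ ha0 (mul_right_cancel₀ hb0 h)
    have h2 : g23 = g23' := by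
      have h := e2.symm.trans e2'
      exact mul_left_cancel₀ hb0 (mul_right_cancel₀ hc0 h)
    refine ⟨h1, h2, ?_⟩
    intro l12 l23
    have hd12 : (0:ℝ) < Real.sqrt (1 - ‖g12‖ ^ 2) :=
      Real.sqrt_pos.mpr (by nlinarith [norm_nonneg g12])
    have hd23 : (0:ℝ) < Real.sqrt (1 - ‖g23‖ ^ 2) :=
      Real.sqrt_pos.mpr (by nlinarith [norm_nonneg g23])
    have hd12c : ((Real.sqrt (1 - ‖g12‖ ^ 2) : ℝ) : ℂ) ≠ 0 := by exact_mod_cast hd12.ne'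
    have hd23c : ((Real.sqrt (1 - ‖g23‖ ^ 2) : ℝ) : ℂ) ≠ 0 := by exact_mod_cast hd23.ne'
    have h := e3.symm.trans e3'
    rw [← h1, ← h2] at h
    have h3 := mul_left_cancel₀ ha0 (mul_right_cancel₀ hc0 h)
    have h4 := add_left_cancel h3
    exact mul_left_cancel₀ hd12c (mul_right_cancel₀ hd23c h4)
end

section
/- Let S = [S_{kj}]_{k,j=1}^4 be a Hermitian 4×4 complex matrix with strictly positive diagonal entries S_{kk} > 0 and with S_{12} = 0 and S_{34} = 0. Then S is positive semidefinite if and only if there exist complex numbers Γ_{23}, Γ_{13}, Γ_{24}, Γ_{14}, each of modulus at most 1, such that S_{23} = S_{22}^{1/2} Γ_{23} S_{33}^{1/2}, S_{13} = S_{11}^{1/2} Γ_{13} (1−|Γ_{23}|²)^{1/2} S_{33}^{1/2}, S_{24} = S_{22}^{1/2} (1−|Γ_{23}|²)^{1/2} Γ_{24} S_{44}^{1/2}, and S_{14} = S_{11}^{1/2} (−Γ_{13} · conj(Γ_{23}) · Γ_{24} + (1−|Γ_{13}|²)^{1/2} Γ_{14} (1−|Γ_{24}|²)^{1/2}) S_{44}^{1/2}.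 -/
open Complex Matrix
open scoped ComplexOrder
open scoped ComplexConjugate

private lemma psd_det_nonneg' {n : Type*} [Fintype n] [DecidableEq n] {M : Matrix n n ℂ}
    (h : M.PosSemidef) : (0:ℂ) ≤ M.det := by
  rw [h.1.det_eq_prod_eigenvalues]
  exact Finset.prod_nonneg fun i _ => Complex.zero_le_real.mpr (h.eigenvalues_nonneg i)

private lemma le_one_of_mul_le' {x c : ℝ} (hc : 0 < c) (h : x * c ≤ c) : x ≤ 1 := by
  nlinarith

private lemma nonpos_of_mul_nonpos' {s n : ℝ} (hs : 0 < s) (h : s * n ≤ 0) : n ≤ 0 := by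
  nlinarith

private lemma nonneg_of_mul_nonneg' {c g : ℝ} (hc : 0 < c) (h : 0 ≤ c * g) : 0 ≤ g := by
  nlinarith

private lemma one_sub_sq_nonneg' (z : ℂ) (hz : ‖z‖ ≤ 1) :
    (0:ℝ) ≤ 1 - ‖z‖ ^ 2 := by
  nlinarith [norm_nonneg z]

private lemma sqrt_sq_conj (z : ℂ) (hz : ‖z‖ ≤ 1) :
    ((Real.sqrt (1 - ‖z‖ ^ 2) : ℝ) : ℂ) ^ 2 = 1 - z * conj z := by
  have h1 : (0:ℝ) ≤ 1 - ‖z‖ ^ 2 := one_sub_sq_nonneg' z hz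
  rw [← Complex.ofReal_pow, Real.sq_sqrt h1, Complex.mul_conj, Complex.normSq_eq_norm_sq]
  push_cast
  ring

private lemma abs_le_one_of_normSq_le_one {z : ℂ} (h : Complex.normSq z ≤ 1) :
    ‖z‖ ≤ 1 := by
  nlinarith [Complex.sq_norm z, norm_nonneg z]

set_option maxHeartbeats 1600000 in
/-- Schur-type parametrization of positive semidefinite 4×4 Hermitian matrices with
strictly positive diagonal and `S₁₂ = S₃₄ = 0`. -/
theorem stmt_3 (S : Matrix (Fin 4) (Fin 4) ℂ) (hHerm : S.IsHermitian)
    (hdiag : ∀ k, 0 < (S k k).re) (h12 : S 0 1 = 0) (h34 : S 2 3 = 0) :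
    S.PosSemidef ↔
      ∃ Γ₂₃ Γ₁₃ Γ₂₄ Γ₁₄ : ℂ,
        ‖Γ₂₃‖ ≤ 1 ∧ ‖Γ₁₃‖ ≤ 1 ∧
        ‖Γ₂₄‖ ≤ 1 ∧ ‖Γ₁₄‖ ≤ 1 ∧
        S 1 2 = (Real.sqrt (S 1 1).re : ℂ) * Γ₂₃ * (Real.sqrt (S 2 2).re : ℂ) ∧
        S 0 2 = (Real.sqrt (S 0 0).re : ℂ) * Γ₁₃ *
          (Real.sqrt (1 - ‖Γ₂₃‖ ^ 2) : ℂ) * (Real.sqrt (S 2 2).re : ℂ) ∧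
        S 1 3 = (Real.sqrt (S 1 1).re : ℂ) * (Real.sqrt (1 - ‖Γ₂₃‖ ^ 2) : ℂ) *
          Γ₂₄ * (Real.sqrt (S 3 3).re : ℂ) ∧
        S 0 3 = (Real.sqrt (S 0 0).re : ℂ) *
          (-(Γ₁₃ * (starRingEnd ℂ) Γ₂₃ * Γ₂₄) +
            (Real.sqrt (1 - ‖Γ₁₃‖ ^ 2) : ℂ) * Γ₁₄ *
              (Real.sqrt (1 - ‖Γ₂₄‖ ^ 2) : ℂ)) * (Real.sqrt (S 3 3).re : ℂ) := by
  have herm : ∀ i j : Fin 4, S i j = conj (S j i) := fun i j => (hHerm.apply i j).symm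
  have hdre : ∀ k, S k k = ((S k k).re : ℂ) := fun k =>
    (Complex.conj_eq_iff_re.mp (herm k k).symm).symm
  set s0 := (S 0 0).re with hs0d
  set s1 := (S 1 1).re with hs1d
  set s2 := (S 2 2).re with hs2d
  set s3 := (S 3 3).re with hs3d
  have hs0 : 0 < s0 := hdiag 0
  have hs1 : 0 < s1 := hdiag 1
  have hs2 : 0 < s2 := hdiag 2
  have hs3 : 0 < s3 := hdiag 3
  set r0 := Real.sqrt s0 with hr0d
  set r1 := Real.sqrt s1 with hr1d
  set r2 := Real.sqrt s2 with hr2d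
  set r3 := Real.sqrt s3 with hr3d
  have hr0 : 0 < r0 := Real.sqrt_pos.mpr hs0
  have hr1 : 0 < r1 := Real.sqrt_pos.mpr hs1
  have hr2 : 0 < r2 := Real.sqrt_pos.mpr hs2
  have hr3 : 0 < r3 := Real.sqrt_pos.mpr hs3
  have hr0s : r0 * r0 = s0 := Real.mul_self_sqrt hs0.le
  have hr1s : r1 * r1 = s1 := Real.mul_self_sqrt hs1.le
  have hr2s : r2 * r2 = s2 := Real.mul_self_sqrt hs2.le
  have hr3s : r3 * r3 = s3 := Real.mul_self_sqrt hs3.le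
  have hdre0 : S 0 0 = ((s0:ℝ):ℂ) := hdre 0
  have hdre1 : S 1 1 = ((s1:ℝ):ℂ) := hdre 1
  have hdre2 : S 2 2 = ((s2:ℝ):ℂ) := hdre 2
  have hdre3 : S 3 3 = ((s3:ℝ):ℂ) := hdre 3
  have c20 : S 2 0 = conj (S 0 2) := herm 2 0
  have c21 : S 2 1 = conj (S 1 2) := herm 2 1
  have c30 : S 3 0 = conj (S 0 3) := herm 3 0
  have c31 : S 3 1 = conj (S 1 3) := herm 3 1
  have hr0c : ((r0:ℝ):ℂ) ≠ 0 := by exact_mod_cast hr0.ne'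
  have hr1c : ((r1:ℝ):ℂ) ≠ 0 := by exact_mod_cast hr1.ne'
  have hr2c : ((r2:ℝ):ℂ) ≠ 0 := by exact_mod_cast hr2.ne'
  have hr3c : ((r3:ℝ):ℂ) ≠ 0 := by exact_mod_cast hr3.ne'
  have hS00 : S 0 0 = ((r0:ℝ):ℂ) ^ 2 := by rw [hdre 0, ← hs0d, ← hr0s]; push_cast; ring
  have hS11 : S 1 1 = ((r1:ℝ):ℂ) ^ 2 := by rw [hdre 1, ← hs1d, ← hr1s]; push_cast; ring
  have hS22 : S 2 2 = ((r2:ℝ):ℂ) ^ 2 := by rw [hdre 2, ← hs2d, ← hr2s]; push_cast; ring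
  have hS33 : S 3 3 = ((r3:ℝ):ℂ) ^ 2 := by rw [hdre 3, ← hs3d, ← hr3s]; push_cast; ring
  have h10 : S 1 0 = 0 := by rw [herm 1 0, h12, map_zero]
  have h43 : S 3 2 = 0 := by rw [herm 3 2, h34, map_zero]
  constructor
  · -- forward direction
    intro hS
    -- principal minors
    have m12 : Complex.normSq (S 1 2) ≤ s1 * s2 := by
      have h0 := psd_det_nonneg' (hS.submatrix ![1, 2])
      have hd : (S.submatrix ![1,2] ![1,2]).det
          = ((s1 * s2 - Complex.normSq (S 1 2) : ℝ) : ℂ) := by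
        rw [Matrix.det_fin_two]
        simp only [Matrix.submatrix_apply, Matrix.cons_val_zero, Matrix.cons_val_one,
          Matrix.head_cons]
        simp only [hdre1, hdre2, c21]
        push_cast [← Complex.mul_conj]
        ring
      rw [hd] at h0
      have := Complex.zero_le_real.mp h0
      linarith
    have m03 : Complex.normSq (S 0 3) ≤ s0 * s3 := by
      have h0 := psd_det_nonneg' (hS.submatrix ![0, 3])
      have hd : (S.submatrix ![0,3] ![0,3]).det
          = ((s0 * s3 - Complex.normSq (S 0 3) : ℝ) : ℂ) := by
        rw [Matrix.det_fin_two]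
        simp only [Matrix.submatrix_apply, Matrix.cons_val_zero, Matrix.cons_val_one,
          Matrix.head_cons]
        simp only [hdre0, hdre3, c30]
        push_cast [← Complex.mul_conj]
        ring
      rw [hd] at h0
      have := Complex.zero_le_real.mp h0
      linarith
    have m012 : s1 * Complex.normSq (S 0 2) ≤ s0 * (s1 * s2 - Complex.normSq (S 1 2)) := by
      have h0 := psd_det_nonneg' (hS.submatrix ![0, 1, 2])
      have hd : (S.submatrix ![0,1,2] ![0,1,2]).det
          = ((s0 * (s1 * s2 - Complex.normSq (S 1 2))
              - s1 * Complex.normSq (S 0 2) : ℝ) : ℂ) := by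
        rw [Matrix.det_fin_three]
        simp only [Matrix.submatrix_apply, Matrix.cons_val_zero, Matrix.cons_val_one,
          Matrix.head_cons, Matrix.cons_val_two, Matrix.tail_cons]
        simp only [h12, h10, c21, c20, hdre0, hdre1, hdre2]
        push_cast [← Complex.mul_conj]
        ring
      rw [hd] at h0
      have := Complex.zero_le_real.mp h0
      linarith
    have m123 : s2 * Complex.normSq (S 1 3) ≤ s3 * (s1 * s2 - Complex.normSq (S 1 2)) := by
      have h0 := psd_det_nonneg' (hS.submatrix ![1, 2, 3])
      have hd : (S.submatrix ![1,2,3] ![1,2,3]).det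
          = ((s3 * (s1 * s2 - Complex.normSq (S 1 2))
              - s2 * Complex.normSq (S 1 3) : ℝ) : ℂ) := by
        rw [Matrix.det_fin_three]
        simp only [Matrix.submatrix_apply, Matrix.cons_val_zero, Matrix.cons_val_one,
          Matrix.head_cons, Matrix.cons_val_two, Matrix.tail_cons]
        simp only [h34, h43, c21, c31, hdre1, hdre2, hdre3]
        push_cast [← Complex.mul_conj]
        ring
      rw [hd] at h0
      have := Complex.zero_le_real.mp h0
      linarith
    have m0123 : (0:ℝ) ≤ s0*s1*s2*s3 - s0*s2*Complex.normSq (S 1 3)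
        - s0*s3*Complex.normSq (S 1 2) - s1*s2*Complex.normSq (S 0 3)
        - s1*s3*Complex.normSq (S 0 2)
        + Complex.normSq (S 1 2 * S 0 3 - S 1 3 * S 0 2) := by
      have h0 := psd_det_nonneg' hS
      have hd : S.det = ((s0*s1*s2*s3 - s0*s2*Complex.normSq (S 1 3)
          - s0*s3*Complex.normSq (S 1 2) - s1*s2*Complex.normSq (S 0 3)
          - s1*s3*Complex.normSq (S 0 2)
          + Complex.normSq (S 1 2 * S 0 3 - S 1 3 * S 0 2) : ℝ) : ℂ) := by
        rw [Matrix.det_succ_row_zero]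
        simp [Fin.sum_univ_succ, Matrix.det_fin_three, Matrix.submatrix_apply,
          show (Fin.succ 2 : Fin 4) = 3 from rfl,
          show Fin.succAbove (1:Fin 4) (2:Fin 3) = 3 from rfl,
          show Fin.succAbove (2:Fin 4) (2:Fin 3) = 3 from rfl,
          show Fin.succAbove (3:Fin 4) (2:Fin 3) = 2 from rfl,
          show (Fin.castSucc 2 : Fin 4) = 2 from rfl,
          h12, h34, h10, h43, c20, c30, c21, c31, hdre0, hdre1, hdre2, hdre3,
          -Complex.ofReal_sub, -Complex.ofReal_mul, -Complex.ofReal_add]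
        push_cast [← Complex.mul_conj]
        simp only [_root_.map_sub, _root_.map_mul]
        ring
      rw [hd] at h0
      exact Complex.zero_le_real.mp h0
    -- the first Schur parameter
    obtain ⟨γ, hγd⟩ : ∃ x : ℂ, x = S 1 2 / (((r1:ℝ):ℂ) * ((r2:ℝ):ℂ)) := ⟨_, rfl⟩
    have e12' : S 1 2 = ((r1:ℝ):ℂ) * γ * ((r2:ℝ):ℂ) := by
      rw [hγd]; field_simp
    have hnγ : Complex.normSq γ * (s1 * s2) = Complex.normSq (S 1 2) := by
      rw [hγd, Complex.normSq_div, Complex.normSq_mul, Complex.normSq_ofReal,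
        Complex.normSq_ofReal, hr1s, hr2s]
      field_simp
    have hnγ1 : Complex.normSq γ ≤ 1 :=
      le_one_of_mul_le' (mul_pos hs1 hs2) (by rw [hnγ]; exact m12)
    have hγ1 : ‖γ‖ ≤ 1 := abs_le_one_of_normSq_le_one hnγ1
    have htn : 1 - ‖γ‖ ^ 2 = 1 - Complex.normSq γ := by rw [Complex.sq_norm]
    set t := 1 - ‖γ‖ ^ 2 with htd
    have ht0 : 0 ≤ t := by rw [htn]; linarith
    rcases eq_or_lt_of_le ht0 with hteq | htpos
    · -- degenerate case t = 0
      have hnγ2 : Complex.normSq γ = 1 := by rw [htn] at hteq; linarith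
      have hn12 : Complex.normSq (S 1 2) = s1 * s2 := by rw [← hnγ, hnγ2]; ring
      have h02 : S 0 2 = 0 := by
        have h : Complex.normSq (S 0 2) ≤ 0 := by
          refine nonpos_of_mul_nonpos' hs1 ?_
          calc s1 * Complex.normSq (S 0 2) ≤ s0 * (s1 * s2 - Complex.normSq (S 1 2)) := m012
          _ = 0 := by rw [hn12]; ring
        exact Complex.normSq_eq_zero.mp (le_antisymm h (Complex.normSq_nonneg _))
      have h13 : S 1 3 = 0 := by
        have h : Complex.normSq (S 1 3) ≤ 0 := by
          refine nonpos_of_mul_nonpos' hs2 ?_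
          calc s2 * Complex.normSq (S 1 3) ≤ s3 * (s1 * s2 - Complex.normSq (S 1 2)) := m123
          _ = 0 := by rw [hn12]; ring
        exact Complex.normSq_eq_zero.mp (le_antisymm h (Complex.normSq_nonneg _))
      obtain ⟨β, hβd⟩ : ∃ x : ℂ, x = S 0 3 / (((r0:ℝ):ℂ) * ((r3:ℝ):ℂ)) := ⟨_, rfl⟩
      have e03'' : S 0 3 = ((r0:ℝ):ℂ) * β * ((r3:ℝ):ℂ) := by
        rw [hβd]; field_simp
      have hnβ : Complex.normSq β * (s0 * s3) = Complex.normSq (S 0 3) := by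
        rw [hβd, Complex.normSq_div, Complex.normSq_mul, Complex.normSq_ofReal,
          Complex.normSq_ofReal, hr0s, hr3s]
        field_simp
      have hβ1 : ‖β‖ ≤ 1 := by
        refine abs_le_one_of_normSq_le_one
          (le_one_of_mul_le' (mul_pos hs0 hs3) (by rw [hnβ]; exact m03))
      refine ⟨γ, 0, 0, β, hγ1, by simp, by simp, hβ1, e12', ?_, ?_, ?_⟩
      · rw [h02]; ring
      · rw [h13]; ring
      · rw [e03'']
        simp only [map_zero, norm_zero, ne_eq, OfNat.ofNat_ne_zero, not_false_eq_true, zero_pow,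
          sub_zero, Real.sqrt_one, Complex.ofReal_one]
        ring
    · -- main case 0 < t
      set dγ := Real.sqrt t with hdγd
      have hdγ0 : 0 < dγ := Real.sqrt_pos.mpr htpos
      have hdγs : dγ * dγ = t := Real.mul_self_sqrt ht0
      have hdγc : ((dγ:ℝ):ℂ) ≠ 0 := by exact_mod_cast hdγ0.ne'
      have hdγcc : ((dγ:ℝ):ℂ) ^ 2 = 1 - γ * conj γ := by
        have : ((dγ:ℝ):ℂ) ^ 2 = ((t:ℝ):ℂ) := by
          rw [← Complex.ofReal_pow, sq, hdγs]
        rw [this, htn, Complex.mul_conj]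
        push_cast
        ring
      obtain ⟨α, hαd⟩ : ∃ x : ℂ, x = S 0 2 / (((r0:ℝ):ℂ) * ((dγ:ℝ):ℂ) * ((r2:ℝ):ℂ)) := ⟨_, rfl⟩
      have e02' : S 0 2 = ((r0:ℝ):ℂ) * α * ((dγ:ℝ):ℂ) * ((r2:ℝ):ℂ) := by
        rw [hαd]; field_simp
      have hnα : Complex.normSq α * (s0 * t * s2) = Complex.normSq (S 0 2) := by
        rw [hαd, Complex.normSq_div, Complex.normSq_mul, Complex.normSq_mul,
          Complex.normSq_ofReal, Complex.normSq_ofReal, Complex.normSq_ofReal,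
          hr0s, hr2s, hdγs]
        have h0 : s0 * t * s2 ≠ 0 := by positivity
        field_simp
      have hnα1 : Complex.normSq α ≤ 1 := by
        refine le_one_of_mul_le' (by positivity : (0:ℝ) < s1 * (s0 * t * s2)) ?_
        calc Complex.normSq α * (s1 * (s0 * t * s2))
            = s1 * (Complex.normSq α * (s0 * t * s2)) := by ring
          _ = s1 * Complex.normSq (S 0 2) := by rw [hnα]
          _ ≤ s0 * (s1 * s2 - Complex.normSq (S 1 2)) := m012
          _ = s1 * (s0 * t * s2) := by
              rw [← hnγ]; linear_combination (-(s0*s1*s2)) * htn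
      have hα1 : ‖α‖ ≤ 1 := abs_le_one_of_normSq_le_one hnα1
      obtain ⟨δ, hδd⟩ : ∃ x : ℂ, x = S 1 3 / (((r1:ℝ):ℂ) * ((dγ:ℝ):ℂ) * ((r3:ℝ):ℂ)) := ⟨_, rfl⟩
      have e13' : S 1 3 = ((r1:ℝ):ℂ) * ((dγ:ℝ):ℂ) * δ * ((r3:ℝ):ℂ) := by
        rw [hδd]; field_simp
      have hnδ : Complex.normSq δ * (s1 * t * s3) = Complex.normSq (S 1 3) := by
        rw [hδd, Complex.normSq_div, Complex.normSq_mul, Complex.normSq_mul,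
          Complex.normSq_ofReal, Complex.normSq_ofReal, Complex.normSq_ofReal,
          hr1s, hr3s, hdγs]
        have h0 : s1 * t * s3 ≠ 0 := by positivity
        field_simp
      have hnδ1 : Complex.normSq δ ≤ 1 := by
        refine le_one_of_mul_le' (by positivity : (0:ℝ) < s2 * (s1 * t * s3)) ?_
        calc Complex.normSq δ * (s2 * (s1 * t * s3))
            = s2 * (Complex.normSq δ * (s1 * t * s3)) := by ring
          _ = s2 * Complex.normSq (S 1 3) := by rw [hnδ]
          _ ≤ s3 * (s1 * s2 - Complex.normSq (S 1 2)) := m123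
          _ = s2 * (s1 * t * s3) := by
              rw [← hnγ]; linear_combination (-(s1*s2*s3)) * htn
      have hδ1 : ‖δ‖ ≤ 1 := abs_le_one_of_normSq_le_one hnδ1
      obtain ⟨e, hed⟩ : ∃ x : ℂ, x = S 0 3 / (((r0:ℝ):ℂ) * ((r3:ℝ):ℂ)) + α * conj γ * δ := ⟨_, rfl⟩
      have e03' : S 0 3 = ((r0:ℝ):ℂ) * ((r3:ℝ):ℂ) * (e - α * conj γ * δ) := by
        rw [hed]; field_simp; ring
      -- key inequality from the 4×4 determinant
      have hn02 : Complex.normSq (S 0 2) = s0 * s2 * t * Complex.normSq α := by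
        rw [← hnα]; ring
      have hn13 : Complex.normSq (S 1 3) = s1 * s3 * t * Complex.normSq δ := by
        rw [← hnδ]; ring
      have hn12 : Complex.normSq (S 1 2) = s1 * s2 * Complex.normSq γ := by
        rw [← hnγ]; ring
      have hn03 : Complex.normSq (S 0 3)
          = s0 * s3 * Complex.normSq (e - α * conj γ * δ) := by
        rw [e03', Complex.normSq_mul, Complex.normSq_mul, Complex.normSq_ofReal,
          Complex.normSq_ofReal, hr0s, hr3s]
      have hcross : S 1 2 * S 0 3 - S 1 3 * S 0 2
          = (((r0*r1*r2*r3 : ℝ)):ℂ) * (γ * e - α * δ) := by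
        rw [e12', e03', e13', e02']
        push_cast
        linear_combination (-((r0:ℝ):ℂ) * ((r1:ℝ):ℂ) * ((r2:ℝ):ℂ) * ((r3:ℝ):ℂ) * α * δ) * hdγcc
      have hncross : Complex.normSq (S 1 2 * S 0 3 - S 1 3 * S 0 2)
          = s0*s1*s2*s3 * Complex.normSq (γ * e - α * δ) := by
        rw [hcross, Complex.normSq_mul, Complex.normSq_ofReal]
        rw [show (r0*r1*r2*r3) * (r0*r1*r2*r3) = s0*s1*s2*s3 from by
          rw [← hr0s, ← hr1s, ← hr2s, ← hr3s]; ring]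
      have hX : Complex.normSq (e - α * conj γ * δ)
          = Complex.normSq e + Complex.normSq α * Complex.normSq γ * Complex.normSq δ
            - 2 * (e * conj (α * conj γ * δ)).re := by
        rw [Complex.normSq_sub, Complex.normSq_mul, Complex.normSq_mul, Complex.normSq_conj]
      have hY : Complex.normSq (γ * e - α * δ)
          = Complex.normSq γ * Complex.normSq e + Complex.normSq α * Complex.normSq δ
            - 2 * (e * conj (α * conj γ * δ)).re := by
        rw [Complex.normSq_sub, Complex.normSq_mul, Complex.normSq_mul]
        have : γ * e * conj (α * δ) = e * conj (α * conj γ * δ) := by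
          simp only [_root_.map_mul, Complex.conj_conj]
          ring
        rw [this]
      have hE : Complex.normSq e ≤ (1 - Complex.normSq α) * (1 - Complex.normSq δ) := by
        have hFval : s0*s1*s2*s3 - s0*s2*Complex.normSq (S 1 3)
            - s0*s3*Complex.normSq (S 1 2) - s1*s2*Complex.normSq (S 0 3)
            - s1*s3*Complex.normSq (S 0 2)
            + Complex.normSq (S 1 2 * S 0 3 - S 1 3 * S 0 2)
            = s0*s1*s2*s3 * (t * ((1 - Complex.normSq α) * (1 - Complex.normSq δ)
                - Complex.normSq e)) := by
          rw [hn02, hn13, hn12, hn03, hncross, hX, hY]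
          linear_combination (-(s0*s1*s2*s3) *
            (1 + Complex.normSq α * Complex.normSq δ - Complex.normSq e)) * htn
        rw [hFval] at m0123
        have h1 : (0:ℝ) ≤ t * ((1 - Complex.normSq α) * (1 - Complex.normSq δ)
            - Complex.normSq e) :=
          nonneg_of_mul_nonneg' (by positivity : (0:ℝ) < s0*s1*s2*s3) m0123
        have h2 := nonneg_of_mul_nonneg' htpos h1
        linarith
      set dα := Real.sqrt (1 - ‖α‖ ^ 2) with hdαd
      set dδ := Real.sqrt (1 - ‖δ‖ ^ 2) with hdδd
      have hα0 : (0:ℝ) ≤ 1 - ‖α‖ ^ 2 := one_sub_sq_nonneg' α hα1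
      have hδ0 : (0:ℝ) ≤ 1 - ‖δ‖ ^ 2 := one_sub_sq_nonneg' δ hδ1
      have hdαs : dα * dα = 1 - Complex.normSq α := by
        rw [hdαd, Real.mul_self_sqrt hα0, Complex.sq_norm]
      have hdδs : dδ * dδ = 1 - Complex.normSq δ := by
        rw [hdδd, Real.mul_self_sqrt hδ0, Complex.sq_norm]
      have hE' : Complex.normSq e ≤ (dα * dδ) * (dα * dδ) := by
        calc Complex.normSq e ≤ (1 - Complex.normSq α) * (1 - Complex.normSq δ) := hE
        _ = (dα * dδ) * (dα * dδ) := by rw [← hdαs, ← hdδs]; ring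
      by_cases hz : dα * dδ = 0
      · have he0 : e = 0 := by
          have h : Complex.normSq e ≤ 0 := by rw [hz] at hE'; simpa using hE'
          exact Complex.normSq_eq_zero.mp (le_antisymm h (Complex.normSq_nonneg _))
        refine ⟨γ, α, δ, 0, hγ1, hα1, hδ1, by simp, e12', ?_, ?_, ?_⟩
        · rw [e02']
        · rw [e13']
        · rw [e03', he0, ← hdαd, ← hdδd]; ring
      · obtain ⟨β, hβd⟩ : ∃ x : ℂ, x = e / (((dα * dδ : ℝ)):ℂ) := ⟨_, rfl⟩
        have hzc : (((dα * dδ : ℝ)):ℂ) ≠ 0 := by exact_mod_cast hz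
        have hβe : ((dα:ℝ):ℂ) * β * ((dδ:ℝ):ℂ) = e := by
          rw [hβd, show ((dα:ℝ):ℂ) * (e / ((dα*dδ:ℝ):ℂ)) * ((dδ:ℝ):ℂ)
            = e * (((dα*dδ:ℝ):ℂ) / ((dα*dδ:ℝ):ℂ)) from by push_cast; ring,
            div_self hzc, mul_one]
        have hnβ : Complex.normSq β * ((dα*dδ) * (dα*dδ)) = Complex.normSq e := by
          rw [hβd, Complex.normSq_div, Complex.normSq_ofReal]
          field_simp
          rw [mul_assoc, mul_div_assoc, div_self hz, mul_one]
        have hβ1 : ‖β‖ ≤ 1 := by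
          refine abs_le_one_of_normSq_le_one
            (le_one_of_mul_le' (mul_self_pos.mpr hz) (by rw [hnβ]; exact hE'))
        refine ⟨γ, α, δ, β, hγ1, hα1, hδ1, hβ1, e12', ?_, ?_, ?_⟩
        · rw [e02']
        · rw [e13']
        · rw [e03', ← hdαd, ← hdδd]
          linear_combination (-((r0:ℝ):ℂ) * ((r3:ℝ):ℂ)) * hβe
  · -- backward direction
    rintro ⟨γ, α, δ, β, hγ, hα, hδ, hβ, e12, e02, e13, e03⟩
    set dγ := Real.sqrt (1 - ‖γ‖ ^ 2) with hdγd
    set dα := Real.sqrt (1 - ‖α‖ ^ 2) with hdαd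
    set dδ := Real.sqrt (1 - ‖δ‖ ^ 2) with hdδd
    set dβ := Real.sqrt (1 - ‖β‖ ^ 2) with hdβd
    have hdγ : ((dγ:ℝ):ℂ) ^ 2 = 1 - γ * conj γ := sqrt_sq_conj γ hγ
    have hdα : ((dα:ℝ):ℂ) ^ 2 = 1 - α * conj α := sqrt_sq_conj α hα
    have hdδ : ((dδ:ℝ):ℂ) ^ 2 = 1 - δ * conj δ := sqrt_sq_conj δ hδ
    have hdβ : ((dβ:ℝ):ℂ) ^ 2 = 1 - β * conj β := sqrt_sq_conj β hβ
    set A : ℂ := -(α * conj γ * δ) + dα * β * dδ with hA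
    set C : ℂ := -((dα:ℂ) * conj γ * δ + conj α * β * dδ) with hC
    set M : Matrix (Fin 4) (Fin 4) ℂ :=
      !![(r0:ℂ), 0, (r2:ℂ) * (α * dγ), (r3:ℂ) * A;
         0, (r1:ℂ), (r2:ℂ) * γ, (r3:ℂ) * (dγ * δ);
         0, 0, (r2:ℂ) * (dα * dγ), (r3:ℂ) * C;
         0, 0, 0, (r3:ℂ) * (dβ * dδ)] with hM
    have key : S = Mᴴ * M := by
      ext i j
      fin_cases i <;> fin_cases j <;>
        simp [hM, Matrix.mul_apply, Fin.sum_univ_four, Matrix.conjTranspose_apply,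
          _root_.map_mul, map_add, map_neg, Complex.conj_ofReal, h12, h34, h10, h43,
          hS00, hS11, hS22, hS33, e12, e02, e13, e03, c20, c21, c30, c31, hA, hC,
          Matrix.vecHead, Matrix.vecTail]
      all_goals first
        | ring1
        | linear_combination (-((r2:ℝ):ℂ)^2*((dγ:ℝ):ℂ)^2) * hdα + (-((r2:ℝ):ℂ)^2) * hdγ
        | linear_combination (((r2:ℝ):ℂ)*((r3:ℝ):ℂ)*((dγ:ℝ):ℂ)*(conj γ)*δ) * hdα
        | linear_combination (((r2:ℝ):ℂ)*((r3:ℝ):ℂ)*((dγ:ℝ):ℂ)*γ*(conj δ)) * hdα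
        | linear_combination (-((r3:ℝ):ℂ)^2*(γ*(conj γ)*δ*(conj δ)
              + β*(conj β)*((dδ:ℝ):ℂ)^2)) * hdα
            + (-((r3:ℝ):ℂ)^2*δ*(conj δ)) * hdγ
            + (-((r3:ℝ):ℂ)^2*((dδ:ℝ):ℂ)^2) * hdβ + (-((r3:ℝ):ℂ)^2) * hdδ
    rw [key]
    exact Matrix.posSemidef_conjTranspose_mul_self M
end

section
/- Let S = [S_{kj}]_{k,j=1}^4 be a positive semidefinite Hermitian 4×4 complex matrix with strictly positive diagonal entries S_{kk} > 0 and with S_{12} = 0 and S_{34} = 0. Define Γ_{23} = S_{23} / (S_{22}^{1/2} S_{33}^{1/2}) and assume |Γ_{23}| < 1, define Γ_{13} = S_{13} / (S_{11}^{1/2} (1−|Γ_{23}|²)^{1/2} S_{33}^{1/2}) and Γ_{24} = S_{24} / (S_{22}^{1/2} (1−|Γ_{23}|²)^{1/2} S_{44}^{1/2}), and assume |Γ_{13}| < 1 and |Γ_{24}| < 1. Then there is a unique complex number Γ_{14} with |Γ_{14}| ≤ 1 such that S_{14} = S_{11}^{1/2} (−Γ_{13} · conj(Γ_{23}) · Γ_{24}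 + (1−|Γ_{13}|²)^{1/2} Γ_{14} (1−|Γ_{24}|²)^{1/2}) S_{44}^{1/2}. -/
open Complex

local notation "⟪" x ", " y "⟫" => @inner ℂ _ _ x y

lemma gram_key {E : Type*} [NormedAddCommGroup E] [InnerProductSpace ℂ E]
    (e0 e1 e2 e3 : E) (γ g13 g24 ρ : ℂ) (D : ℝ) (hD : 0 < D)
    (hD2 : (D:ℂ)^2 = 1 - γ * (starRingEnd ℂ) γ)
    (h00 : ⟪e0, e0⟫ = 1) (h11 : ⟪e1, e1⟫ = 1) (h22 : ⟪e2, e2⟫ = 1) (h33 : ⟪e3, e3⟫ = 1)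
    (h01 : ⟪e0, e1⟫ = 0) (h23 : ⟪e2, e3⟫ = 0)
    (h12 : ⟪e1, e2⟫ = γ) (h02 : ⟪e0, e2⟫ = (D:ℂ) * g13) (h13 : ⟪e1, e3⟫ = (D:ℂ) * g24)
    (h03 : ⟪e0, e3⟫ = ρ) :
    ‖ρ + g13 * (starRingEnd ℂ) γ * g24‖ ≤
      Real.sqrt (1 - ‖g13‖ ^ 2) * Real.sqrt (1 - ‖g24‖ ^ 2) := by
  have h10 : ⟪e1, e0⟫ = 0 := by rw [← inner_conj_symm, h01]; simp
  have h32 : ⟪e3, e2⟫ = 0 := by rw [← inner_conj_symm, h23]; simp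
  have h21 : ⟪e2, e1⟫ = (starRingEnd ℂ) γ := by rw [← inner_conj_symm, h12]
  have h20 : ⟪e2, e0⟫ = (D:ℂ) * (starRingEnd ℂ) g13 := by
    rw [← inner_conj_symm, h02]; simp
  have h31 : ⟪e3, e1⟫ = (D:ℂ) * (starRingEnd ℂ) g24 := by
    rw [← inner_conj_symm, h13]; simp
  have hDne : (D:ℂ) ≠ 0 := by exact_mod_cast hD.ne'
  set u : E := e0 - ((starRingEnd ℂ) g13 * (D:ℂ)⁻¹) • (e2 - γ • e1) with hu
  set w : E := e3 - (g24 * (D:ℂ)⁻¹) • (e1 - (starRingEnd ℂ) γ • e2) with hw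
  have huw : ⟪u, w⟫ = ρ + g13 * (starRingEnd ℂ) γ * g24 := by
    simp only [hu, hw, inner_sub_left, inner_sub_right, inner_smul_left, inner_smul_right,
      map_mul, map_inv₀, Complex.conj_conj, Complex.conj_ofReal,
      h00, h11, h22, h33, h01, h23, h12, h02, h13, h03, h10, h32, h21, h20, h31]
    field_simp
    linear_combination (g13 * (starRingEnd ℂ) γ * g24) * hD2
  have huu : ⟪u, u⟫ = 1 - g13 * (starRingEnd ℂ) g13 := by
    simp only [hu, inner_sub_left, inner_sub_right, inner_smul_left, inner_smul_right,
      map_mul, map_inv₀, Complex.conj_conj, Complex.conj_ofReal,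
      h00, h11, h22, h01, h12, h02, h10, h21, h20]
    field_simp
    linear_combination (-(g13 * (starRingEnd ℂ) g13)) * hD2
  have hww : ⟪w, w⟫ = 1 - g24 * (starRingEnd ℂ) g24 := by
    simp only [hw, inner_sub_left, inner_sub_right, inner_smul_left, inner_smul_right,
      map_mul, map_inv₀, Complex.conj_conj, Complex.conj_ofReal,
      h11, h22, h33, h23, h12, h13, h32, h21, h31]
    field_simp
    linear_combination (-(g24 * (starRingEnd ℂ) g24)) * hD2
  have hnu : ‖u‖ = Real.sqrt (1 - ‖g13‖ ^ 2) := by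
    have h2 : ‖u‖ ^ 2 = 1 - ‖g13‖ ^ 2 := by
      rw [← @inner_self_eq_norm_sq ℂ, huu]
      simp [Complex.mul_conj, ← Complex.sq_norm, Complex.normSq_eq_norm_sq, ← Complex.ofReal_pow, Complex.ofReal_re]
    rw [← h2, Real.sqrt_sq (norm_nonneg _)]
  have hnw : ‖w‖ = Real.sqrt (1 - ‖g24‖ ^ 2) := by
    have h2 : ‖w‖ ^ 2 = 1 - ‖g24‖ ^ 2 := by
      rw [← @inner_self_eq_norm_sq ℂ, hww]
      simp [Complex.mul_conj, ← Complex.sq_norm, Complex.normSq_eq_norm_sq, ← Complex.ofReal_pow, Complex.ofReal_re]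
    rw [← h2, Real.sqrt_sq (norm_nonneg _)]
  calc ‖ρ + g13 * (starRingEnd ℂ) γ * g24‖ = ‖⟪u, w⟫‖ := by
        rw [huw]
    _ ≤ ‖u‖ * ‖w‖ := norm_inner_le_norm u w
    _ = _ := by rw [hnu, hnw]

open Matrix
open scoped ComplexOrder

/-- In the non-degenerate case, the parameter `Γ₁₄` of a positive semidefinite 4×4 matrix
with `S₁₂ = S₃₄ = 0` exists and is uniquely determined. -/
theorem stmt_4 (S : Matrix (Fin 4) (Fin 4) ℂ) (hS : S.PosSemidef)
    (hdiag : ∀ k, 0 < (S k k).re) (h12 : S 0 1 = 0) (h34 : S 2 3 = 0)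
    (Γ₂₃ Γ₁₃ Γ₂₄ : ℂ)
    (hΓ₂₃ : Γ₂₃ = S 1 2 / ((Real.sqrt (S 1 1).re : ℂ) * (Real.sqrt (S 2 2).re : ℂ)))
    (h23 : ‖Γ₂₃‖ < 1)
    (hΓ₁₃ : Γ₁₃ = S 0 2 / ((Real.sqrt (S 0 0).re : ℂ) *
      (Real.sqrt (1 - ‖Γ₂₃‖ ^ 2) : ℂ) * (Real.sqrt (S 2 2).re : ℂ)))
    (hΓ₂₄ : Γ₂₄ = S 1 3 / ((Real.sqrt (S 1 1).re : ℂ) *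
      (Real.sqrt (1 - ‖Γ₂₃‖ ^ 2) : ℂ) * (Real.sqrt (S 3 3).re : ℂ)))
    (h13 : ‖Γ₁₃‖ < 1) (h24 : ‖Γ₂₄‖ < 1) :
    ∃! Γ₁₄ : ℂ, ‖Γ₁₄‖ ≤ 1 ∧
      S 0 3 = (Real.sqrt (S 0 0).re : ℂ) *
        (-(Γ₁₃ * (starRingEnd ℂ) Γ₂₃ * Γ₂₄) +
          (Real.sqrt (1 - ‖Γ₁₃‖ ^ 2) : ℂ) * Γ₁₄ *
            (Real.sqrt (1 - ‖Γ₂₄‖ ^ 2) : ℂ)) * (Real.sqrt (S 3 3).re : ℂ) := by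
  classical
  have hspos : ∀ k, 0 < Real.sqrt (S k k).re := fun k => Real.sqrt_pos.mpr (hdiag k)
  have hsne : ∀ k, ((Real.sqrt (S k k).re : ℝ) : ℂ) ≠ 0 :=
    fun k => Complex.ofReal_ne_zero.mpr (hspos k).ne'
  have hSkk : ∀ k, S k k = ((Real.sqrt (S k k).re : ℝ) : ℂ) ^ 2 := by
    intro k
    have hherm : (starRingEnd ℂ) (S k k) = S k k := by
      conv_lhs => rw [← hS.1]
      simp [Matrix.conjTranspose_apply]
    have hre : S k k = ((S k k).re : ℂ) := (Complex.conj_eq_iff_re.mp hherm).symm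
    nth_rewrite 1 [hre]
    rw [← Complex.ofReal_pow, Real.sq_sqrt (hdiag k).le]
  -- the defect of Γ₂₃
  have hDpos : 0 < Real.sqrt (1 - ‖Γ₂₃‖ ^ 2) :=
    Real.sqrt_pos.mpr (by nlinarith [norm_nonneg Γ₂₃])
  have hDne : ((Real.sqrt (1 - ‖Γ₂₃‖ ^ 2) : ℝ) : ℂ) ≠ 0 :=
    Complex.ofReal_ne_zero.mpr hDpos.ne'
  have hD2 : ((Real.sqrt (1 - ‖Γ₂₃‖ ^ 2) : ℝ) : ℂ) ^ 2
      = 1 - Γ₂₃ * (starRingEnd ℂ) Γ₂₃ := by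
    rw [Complex.mul_conj, ← Complex.sq_norm, ← Complex.ofReal_pow,
      Real.sq_sqrt (by nlinarith [norm_nonneg Γ₂₃])]
    push_cast
    ring
  -- Gram vectors
  obtain ⟨A, hA⟩ : ∃ A : Matrix (Fin 4) (Fin 4) ℂ, S = Aᴴ * A := by
    open scoped MatrixOrder in
    obtain ⟨B, hB⟩ := CStarAlgebra.nonneg_iff_eq_star_mul_self.mp hS.nonneg
    exact ⟨B, hB⟩
  have hvS : ∀ j k, ⟪(WithLp.equiv 2 (Fin 4 → ℂ)).symm (fun i => A i j),
      (WithLp.equiv 2 (Fin 4 → ℂ)).symm (fun i => A i k)⟫ = S j k := by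
    intro j k
    rw [PiLp.inner_apply]
    rw [hA, Matrix.mul_apply]
    simp [Matrix.conjTranspose_apply, RCLike.inner_apply]
    exact Finset.sum_congr rfl fun i _ => mul_comm _ _
  set e : Fin 4 → EuclideanSpace ℂ (Fin 4) := fun k =>
    ((Real.sqrt (S k k).re : ℝ) : ℂ)⁻¹ •
      (WithLp.equiv 2 (Fin 4 → ℂ)).symm (fun i => A i k) with he
  have heS : ∀ j k, ⟪e j, e k⟫
      = S j k / (((Real.sqrt (S j j).re : ℝ) : ℂ) * ((Real.sqrt (S k k).re : ℝ) : ℂ)) := by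
    intro j k
    rw [he]
    rw [inner_smul_left, inner_smul_right, hvS]
    rw [map_inv₀, Complex.conj_ofReal]
    field_simp [hsne j, hsne k]
  have hkk : ∀ k, ⟪e k, e k⟫ = 1 := by
    intro k
    rw [heS]
    nth_rewrite 1 [hSkk k]
    rw [sq, div_self (mul_ne_zero (hsne k) (hsne k))]
  have h01' : ⟪e 0, e 1⟫ = 0 := by rw [heS, h12, zero_div]
  have h23' : ⟪e 2, e 3⟫ = 0 := by rw [heS, h34, zero_div]
  have h12' : ⟪e 1, e 2⟫ = Γ₂₃ := by rw [heS, hΓ₂₃]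
  have h02' : ⟪e 0, e 2⟫ = ((Real.sqrt (1 - ‖Γ₂₃‖ ^ 2) : ℝ) : ℂ) * Γ₁₃ := by
    rw [heS, hΓ₁₃]
    field_simp [hsne 0, hsne 2]
  have h13' : ⟪e 1, e 3⟫ = ((Real.sqrt (1 - ‖Γ₂₃‖ ^ 2) : ℝ) : ℂ) * Γ₂₄ := by
    rw [heS, hΓ₂₄]
    field_simp [hsne 1, hsne 3]
  set r : ℂ := S 0 3 /
    (((Real.sqrt (S 0 0).re : ℝ) : ℂ) * ((Real.sqrt (S 3 3).re : ℝ) : ℂ)) with hr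
  have key := gram_key (e 0) (e 1) (e 2) (e 3) Γ₂₃ Γ₁₃ Γ₂₄ r
    (Real.sqrt (1 - ‖Γ₂₃‖ ^ 2)) hDpos hD2
    (hkk 0) (hkk 1) (hkk 2) (hkk 3) h01' h23' h12' h02' h13' (heS 0 3)
  clear_value e
  clear he heS hkk h01' h23' h12' h02' h13' hvS hA e A
  -- defects of Γ₁₃ and Γ₂₄
  have hapos : 0 < Real.sqrt (1 - ‖Γ₁₃‖ ^ 2) :=
    Real.sqrt_pos.mpr (by nlinarith [norm_nonneg Γ₁₃])
  have hbpos : 0 < Real.sqrt (1 - ‖Γ₂₄‖ ^ 2) :=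
    Real.sqrt_pos.mpr (by nlinarith [norm_nonneg Γ₂₄])
  have hane : ((Real.sqrt (1 - ‖Γ₁₃‖ ^ 2) : ℝ) : ℂ) ≠ 0 :=
    Complex.ofReal_ne_zero.mpr hapos.ne'
  have hbne : ((Real.sqrt (1 - ‖Γ₂₄‖ ^ 2) : ℝ) : ℂ) ≠ 0 :=
    Complex.ofReal_ne_zero.mpr hbpos.ne'
  set a : ℂ := ((Real.sqrt (1 - ‖Γ₁₃‖ ^ 2) : ℝ) : ℂ) with ha
  set b : ℂ := ((Real.sqrt (1 - ‖Γ₂₄‖ ^ 2) : ℝ) : ℂ) with hb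
  set X : ℂ := Γ₁₃ * (starRingEnd ℂ) Γ₂₃ * Γ₂₄ with hX
  refine ⟨(r + X) / (a * b), ⟨?_, ?_⟩, ?_⟩
  · rw [norm_div, norm_mul]
    rw [ha, hb, Complex.norm_real, Complex.norm_real, Real.norm_eq_abs, Real.norm_eq_abs, abs_of_pos hapos, abs_of_pos hbpos]
    rw [div_le_one (by positivity)]
    exact key
  · have hab : a * ((r + X) / (a * b)) * b = r + X := by
      field_simp
    rw [hab, hr]
    field_simp [hsne 0, hsne 3]
    ring
  · rintro y ⟨-, hy⟩
    have heq : ((Real.sqrt (S 0 0).re : ℝ) : ℂ) * (-X + a * y * b) *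
        ((Real.sqrt (S 3 3).re : ℝ) : ℂ) = S 0 3 := hy.symm
    have hy' : a * y * b = r + X := by
      have hr' : ((Real.sqrt (S 0 0).re : ℝ) : ℂ) * ((Real.sqrt (S 3 3).re : ℝ) : ℂ) * r
          = S 0 3 := by
        rw [hr, mul_comm, div_mul_cancel₀ _ (mul_ne_zero (hsne 0) (hsne 3))]
      have h1 : ((Real.sqrt (S 0 0).re : ℝ) : ℂ) * ((Real.sqrt (S 3 3).re : ℝ) : ℂ) *
          (a * y * b - (r + X)) = 0 := by
        linear_combination heq - hr'
      rcases mul_eq_zero.mp h1 with h | h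
      · exact absurd h (mul_ne_zero (hsne 0) (hsne 3))
      · exact sub_eq_zero.mp h
    rw [eq_div_iff (mul_ne_zero hane hbne), ← hy']
    ring
end

section
/- Let t₁, t₂, t₃, λ₁, λ₂, λ₃ be real numbers and let Φ_{t,Λ} : M_2(ℂ) → M_2(ℂ) be the linear map determined by Φ_{t,Λ}(I) = I + t₁σ_x + t₂σ_y + t₃σ_z, Φ_{t,Λ}(σ_x) = λ₁σ_x, Φ_{t,Λ}(σ_y) = λ₂σ_y, Φ_{t,Λ}(σ_z) = λ₃σ_z. Set d₁ = 1+t₃+λ₃, d₂ = 1+t₃−λ₃, d₃ = 1−t₃−λ₃, d₄ = 1−t₃+λ₃ and assume d₁, d₂, d₃, d₄ > 0. Set Γ₂₃ = (λ₁−λ₂)/√(d₂d₃) and assume |Γ₂₃| < 1; set Γ₁₃ = (t₁+it₂)√d₂ / (√(d₂d₃−(λ₁−λ₂)²) √d₁) and Γ₂₄ = (t₁+it₂)√d₃ / (√(d₂d₃−(λ₁−λ₂)²) √d₄), and assume |Γ₁₃| < 1 and |Γ₂₄| < 1. Define Γ₁₄ = ((λ₁+λ₂)/√(d₁d₄) +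 Γ₁₃·conj(Γ₂₃)·Γ₂₄) / (√(1−|Γ₁₃|²)·√(1−|Γ₂₄|²)). Then Φ_{t,Λ} is completely positive if and only if |Γ₁₄| ≤ 1. -/
open Matrix
open scoped ComplexOrder

noncomputable section

set_option maxHeartbeats 3000000

def pauliX : Matrix (Fin 2) (Fin 2) ℂ := !![0, 1; 1, 0]
def pauliY : Matrix (Fin 2) (Fin 2) ℂ := !![0, -Complex.I; Complex.I, 0]
def pauliZ : Matrix (Fin 2) (Fin 2) ℂ := !![1, 0; 0, -1]

/-- `Φ` is completely positive: for every positive integer `m`, the map `Φ ⊗ id_{M_m}`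
(acting entrywise on `Matrix (Fin n × Fin m)`) preserves positive semidefiniteness. -/
def IsCompletelyPositive {n : ℕ}
    (Φ : Matrix (Fin n) (Fin n) ℂ →ₗ[ℂ] Matrix (Fin n) (Fin n) ℂ) : Prop :=
  ∀ m : ℕ, 0 < m → ∀ A : Matrix (Fin n × Fin m) (Fin n × Fin m) ℂ, A.PosSemidef →
    (Matrix.of fun (p q : Fin n × Fin m) => ∑ k : Fin n, ∑ l : Fin n,
      Φ (Matrix.single k l 1) p.1 q.1 * A (k, p.2) (l, q.2)).PosSemidef

def choiM {n : ℕ} (Φ : Matrix (Fin n) (Fin n) ℂ →ₗ[ℂ] Matrix (Fin n) (Fin n) ℂ) :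
    Matrix (Fin n × Fin n) (Fin n × Fin n) ℂ :=
  Matrix.of fun p q => Φ (Matrix.single p.2 q.2 1) p.1 q.1

lemma cp_iff_choi {n : ℕ} (hn : 0 < n)
    (Φ : Matrix (Fin n) (Fin n) ℂ →ₗ[ℂ] Matrix (Fin n) (Fin n) ℂ) :
    IsCompletelyPositive Φ ↔ (choiM Φ).PosSemidef := by
  constructor
  · intro h
    have hn' : NeZero n := ⟨hn.ne'⟩
    set B : Matrix (Fin n × Fin n) (Fin n × Fin n) ℂ :=
      Matrix.of (fun x y => if x = 0 ∧ y.1 = y.2 then 1 else 0) with hB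
    have hentry : ∀ a b : Fin n × Fin n, (Bᴴ * B) a b
        = if a.1 = a.2 ∧ b.1 = b.2 then 1 else 0 := by
      intro a b
      simp only [Matrix.mul_apply, Matrix.conjTranspose_apply, hB, Matrix.of_apply]
      rw [Finset.sum_eq_single 0]
      · by_cases h1 : a.1 = a.2 <;> by_cases h2 : b.1 = b.2 <;> simp [h1, h2]
      · intro x _ hx
        simp [hx]
      · simp
    have hA : (Bᴴ * B).PosSemidef := Matrix.posSemidef_conjTranspose_mul_self B
    have key := h n hn (Bᴴ * B) hA
    convert key using 2
    ext p q
    simp only [choiM, Matrix.of_apply, hentry]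
    rw [Finset.sum_comm]
    rw [Finset.sum_eq_single q.2]
    · rw [Finset.sum_eq_single p.2]
      · simp
      · intro k _ hk
        simp [hk]
      · simp
    · intro l _ hl
      have : ∀ k : Fin n, Φ (single k l 1) p.1 q.1 *
          (if k = p.2 ∧ l = q.2 then (1:ℂ) else 0) = 0 := by
        intro k; simp [hl]
      simp [this]
    · simp
  · intro hChoi
    intro m hm A hA
    obtain ⟨U, hU⟩ : ∃ U : Matrix (Fin n × Fin n) (Fin n × Fin n) ℂ, choiM Φ = Uᴴ * U :=
      by open scoped MatrixOrder in exact CStarAlgebra.nonneg_iff_eq_star_mul_self.mp hChoi.nonneg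
    obtain ⟨V, hV⟩ : ∃ V : Matrix (Fin n × Fin m) (Fin n × Fin m) ℂ, A = Vᴴ * V :=
      by open scoped MatrixOrder in exact CStarAlgebra.nonneg_iff_eq_star_mul_self.mp hA.nonneg
    have hCe : ∀ x y, Φ (single x.2 y.2 1) x.1 y.1 = ∑ r, star (U r x) * U r y := by
      intro x y
      have : choiM Φ x y = (Uᴴ * U) x y := by rw [← hU]
      simpa [choiM, Matrix.mul_apply, Matrix.conjTranspose_apply] using this
    have hAe : ∀ x y, A x y = ∑ s, star (V s x) * V s y := by
      intro x y
      rw [hV]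
      simp [Matrix.mul_apply, Matrix.conjTranspose_apply]
    set W : Matrix ((Fin n × Fin n) × (Fin n × Fin m)) (Fin n × Fin m) ℂ :=
      Matrix.of (fun rs p => ∑ k, U rs.1 (p.1, k) * V rs.2 (k, p.2)) with hW
    have : (Matrix.of fun (p q : Fin n × Fin m) => ∑ k : Fin n, ∑ l : Fin n,
        Φ (Matrix.single k l 1) p.1 q.1 * A (k, p.2) (l, q.2)) = Wᴴ * W := by
      ext p q
      simp only [Matrix.of_apply, Matrix.mul_apply, Matrix.conjTranspose_apply, hW]
      have expand : ∀ k l : Fin n, Φ (single k l 1) p.1 q.1 * A (k, p.2) (l, q.2)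
          = ∑ r, ∑ s, (star (U r (p.1, k)) * star (V s ((k : Fin n), p.2))) *
              (U r (q.1, l) * V s (l, q.2)) := by
        intro k l
        rw [hCe (p.1, k) (q.1, l), hAe (k, p.2) (l, q.2), Finset.sum_mul_sum]
        apply Finset.sum_congr rfl; intro r _
        apply Finset.sum_congr rfl; intro s _
        ring
      simp only [expand]
      have step1 : ∀ k l : Fin n, (∑ r : Fin n × Fin n, ∑ s : Fin n × Fin m,
          (star (U r (p.1, k)) * star (V s ((k : Fin n), p.2))) * (U r (q.1, l) * V s (l, q.2)))
          = ∑ x : (Fin n × Fin n) × (Fin n × Fin m),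
            (star (U x.1 (p.1, k)) * star (V x.2 ((k : Fin n), p.2))) *
              (U x.1 (q.1, l) * V x.2 (l, q.2)) := by
        intro k l
        exact (Fintype.sum_prod_type fun x => (star (U x.1 (p.1, k)) * star (V x.2 ((k : Fin n), p.2))) * (U x.1 (q.1, l) * V x.2 (l, q.2))).symm
      simp only [step1]
      have step2 : (∑ k : Fin n, ∑ l : Fin n, ∑ x : (Fin n × Fin n) × (Fin n × Fin m),
          (star (U x.1 (p.1, k)) * star (V x.2 ((k : Fin n), p.2))) *
            (U x.1 (q.1, l) * V x.2 (l, q.2)))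
          = ∑ x : (Fin n × Fin n) × (Fin n × Fin m), ∑ k : Fin n, ∑ l : Fin n,
          (star (U x.1 (p.1, k)) * star (V x.2 ((k : Fin n), p.2))) *
            (U x.1 (q.1, l) * V x.2 (l, q.2)) := by
        rw [show (∑ k : Fin n, ∑ l : Fin n, ∑ x : (Fin n × Fin n) × (Fin n × Fin m),
          (star (U x.1 (p.1, k)) * star (V x.2 ((k : Fin n), p.2))) *
            (U x.1 (q.1, l) * V x.2 (l, q.2)))
          = ∑ k : Fin n, ∑ x : (Fin n × Fin n) × (Fin n × Fin m), ∑ l : Fin n,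
          (star (U x.1 (p.1, k)) * star (V x.2 ((k : Fin n), p.2))) *
            (U x.1 (q.1, l) * V x.2 (l, q.2)) from
          Finset.sum_congr rfl fun k _ => Finset.sum_comm]
        exact Finset.sum_comm
      rw [step2]
      apply Finset.sum_congr rfl; intro x _
      rw [star_sum, Finset.sum_mul_sum]
      apply Finset.sum_congr rfl; intro k _
      apply Finset.sum_congr rfl; intro l _
      rw [star_mul']
    rw [this]
    exact Matrix.posSemidef_conjTranspose_mul_self W


def e4 : Fin 4 ≃ Fin 2 × Fin 2 where
  toFun := ![(0,0),(0,1),(1,0),(1,1)]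
  invFun := fun p => ![![0,1],![2,3]] p.1 p.2
  left_inv := by decide
  right_inv := by decide

def M4mat (t₁ t₂ s w d₁ d₂ d₃ d₄ : ℝ) : Matrix (Fin 4) (Fin 4) ℂ :=
  !![((d₁:ℝ):ℂ)/2, 0, ((t₁:ℂ) - (t₂:ℂ)*Complex.I)/2, ((w:ℝ):ℂ)/2;
     0, ((d₂:ℝ):ℂ)/2, ((s:ℝ):ℂ)/2, ((t₁:ℂ) - (t₂:ℂ)*Complex.I)/2;
     ((t₁:ℂ) + (t₂:ℂ)*Complex.I)/2, ((s:ℝ):ℂ)/2, ((d₃:ℝ):ℂ)/2, 0;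
     ((w:ℝ):ℂ)/2, ((t₁:ℂ) + (t₂:ℂ)*Complex.I)/2, 0, ((d₄:ℝ):ℂ)/2]

def Lmat (t₁ t₂ s w d₁ d₂ p₃ : ℝ) : Matrix (Fin 4) (Fin 4) ℂ :=
  !![1,0,0,0; 0,1,0,0;
     ((t₁:ℂ) + (t₂:ℂ)*Complex.I)/d₁, ((s:ℝ):ℂ)/d₂, 1, 0;
     ((w:ℝ):ℂ)/d₁, ((t₁:ℂ) + (t₂:ℂ)*Complex.I)/d₂,
       (-((w:ℂ)*((t₁:ℂ) - (t₂:ℂ)*Complex.I)/d₁ + (s:ℂ)*((t₁:ℂ) + (t₂:ℂ)*Complex.I)/d₂))/(p₃:ℂ), 1]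

def Kmat (t₁ t₂ s w d₁ d₂ p₃ : ℝ) : Matrix (Fin 4) (Fin 4) ℂ :=
  !![1,0,0,0; 0,1,0,0;
     -(((t₁:ℂ) + (t₂:ℂ)*Complex.I)/d₁), -(((s:ℝ):ℂ)/d₂), 1, 0;
     -(((w:ℝ):ℂ)/d₁) + (-((w:ℂ)*((t₁:ℂ) - (t₂:ℂ)*Complex.I)/d₁ + (s:ℂ)*((t₁:ℂ) + (t₂:ℂ)*Complex.I)/d₂))/(p₃:ℂ) * (((t₁:ℂ) + (t₂:ℂ)*Complex.I)/d₁),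
       -(((t₁:ℂ) + (t₂:ℂ)*Complex.I)/d₂) + (-((w:ℂ)*((t₁:ℂ) - (t₂:ℂ)*Complex.I)/d₁ + (s:ℂ)*((t₁:ℂ) + (t₂:ℂ)*Complex.I)/d₂))/(p₃:ℂ) * (((s:ℝ):ℂ)/d₂),
       -((-((w:ℂ)*((t₁:ℂ) - (t₂:ℂ)*Complex.I)/d₁ + (s:ℂ)*((t₁:ℂ) + (t₂:ℂ)*Complex.I)/d₂))/(p₃:ℂ)), 1]

def Dmat (d₁ d₂ p₃ p₄ : ℝ) : Matrix (Fin 4) (Fin 4) ℂ :=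
  Matrix.diagonal ![((d₁/2:ℝ):ℂ), ((d₂/2:ℝ):ℂ), ((p₃/2:ℝ):ℂ), ((p₄/2:ℝ):ℂ)]

lemma ldl_eq (t₁ t₂ s w d₁ d₂ d₃ d₄ e₁ p₃ p₄ : ℝ)
    (hd₁ : d₁ ≠ 0) (hd₂ : d₂ ≠ 0) (he₁ : e₁ ≠ 0)
    (hE : e₁ = d₁*(d₂*d₃ - s^2) - (t₁^2+t₂^2)*d₂)
    (hp₃ : p₃ = e₁/(d₁*d₂))
    (hp₄ : p₄ = d₄ - w^2/d₁ - (t₁^2+t₂^2)/d₂ -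
      ((t₁^2+t₂^2)*(w^2/d₁^2+s^2/d₂^2)+2*w*s*(t₁^2-t₂^2)/(d₁*d₂))/p₃) :
    M4mat t₁ t₂ s w d₁ d₂ d₃ d₄
      = Lmat t₁ t₂ s w d₁ d₂ p₃ * Dmat d₁ d₂ p₃ p₄ * (Lmat t₁ t₂ s w d₁ d₂ p₃)ᴴ := by
  unfold M4mat Lmat Dmat
  have hp₃0 : p₃ ≠ 0 := by
    rw [hp₃]; exact div_ne_zero he₁ (mul_ne_zero hd₁ hd₂)
  have hc₁ : (d₁:ℂ) ≠ 0 := Complex.ofReal_ne_zero.mpr hd₁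
  have hc₂ : (d₂:ℂ) ≠ 0 := Complex.ofReal_ne_zero.mpr hd₂
  have hc₃ : (p₃:ℂ) ≠ 0 := Complex.ofReal_ne_zero.mpr hp₃0
  have hp₃' : (p₃ : ℂ) = (e₁ : ℂ)/((d₁:ℂ)*(d₂:ℂ)) := by rw [hp₃]; push_cast; ring
  have hp₄' : (p₄ : ℂ) = d₄ - w^2/d₁ - (t₁^2+t₂^2)/d₂ -
      ((t₁^2+t₂^2)*(w^2/d₁^2+s^2/d₂^2)+2*w*s*(t₁^2-t₂^2)/(d₁*d₂))/p₃ := by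
    rw [hp₄]; push_cast; ring
  have hE' : (e₁ : ℂ) = d₁*(d₂*d₃ - s^2) - (t₁^2+t₂^2)*d₂ := by rw [hE]; push_cast; ring
  have hce₁ : (e₁:ℂ) ≠ 0 := Complex.ofReal_ne_zero.mpr he₁
  have hE'' : ((d₁:ℂ)*((d₂:ℂ)*(d₃:ℂ) - (s:ℂ)^2) - ((t₁:ℂ)^2+(t₂:ℂ)^2)*(d₂:ℂ)) ≠ 0 := by
    rw [← hE']; exact hce₁
  have hE4 : ((d₁:ℂ)*((d₂:ℂ)*(d₃:ℂ) - (s:ℂ)^2) - (d₂:ℂ)*((t₁:ℂ)^2+(t₂:ℂ)^2)) ≠ 0 := by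
    intro h; apply hE''; linear_combination h
  ext i j
  fin_cases i <;> fin_cases j <;>
    · simp only [Matrix.mul_apply, Fin.sum_univ_four, Matrix.conjTranspose_apply,
        Matrix.diagonal_apply, Matrix.cons_val', Matrix.cons_val_zero, Matrix.cons_val_one,
        Matrix.head_cons, Matrix.head_fin_const, Matrix.empty_val', Matrix.cons_val_fin_one,
        Matrix.cons_val_two, Matrix.tail_cons, Matrix.cons_val_three]
      simp only [show ((0:Fin 4) ≠ (1:Fin 4)) from by decide]
      simp [Complex.star_def, map_div₀, map_add, map_sub, _root_.map_mul, map_neg,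
        _root_.map_one, map_ofNat, Complex.conj_ofReal, Complex.conj_I]
      try simp only [hp₄', hp₃', hE']
      try push_cast
      try field_simp
      try ring_nf
      try simp only [Complex.I_sq]
      try ring_nf

lemma kl_eq (t₁ t₂ s w d₁ d₂ p₃ : ℝ) (hd₁ : d₁ ≠ 0) (hd₂ : d₂ ≠ 0) (hp₃ : p₃ ≠ 0) :
    Kmat t₁ t₂ s w d₁ d₂ p₃ * Lmat t₁ t₂ s w d₁ d₂ p₃ = 1 := by
  unfold Kmat Lmat
  have hc₁ : (d₁:ℂ) ≠ 0 := Complex.ofReal_ne_zero.mpr hd₁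
  have hc₂ : (d₂:ℂ) ≠ 0 := Complex.ofReal_ne_zero.mpr hd₂
  have hc₃ : (p₃:ℂ) ≠ 0 := Complex.ofReal_ne_zero.mpr hp₃
  ext i j
  fin_cases i <;> fin_cases j <;>
    · simp only [Matrix.mul_apply, Fin.sum_univ_four, Matrix.of_apply, Matrix.cons_val', Matrix.cons_val,
        Matrix.one_apply]
      norm_num
      try rw [if_neg (by decide)]
      try field_simp
      try ring


/-- In the non-degenerate case, the binary channel `Φ_{t,Λ}` is completely positive iff
the last Schur parameter `Γ₁₄` satisfies `|Γ₁₄| ≤ 1`. -/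
theorem stmt_10 (t₁ t₂ t₃ lam₁ lam₂ lam₃ : ℝ)
    (Φ : Matrix (Fin 2) (Fin 2) ℂ →ₗ[ℂ] Matrix (Fin 2) (Fin 2) ℂ)
    (hI : Φ 1 = 1 + (t₁ : ℂ) • pauliX + (t₂ : ℂ) • pauliY + (t₃ : ℂ) • pauliZ)
    (hX : Φ pauliX = (lam₁ : ℂ) • pauliX)
    (hY : Φ pauliY = (lam₂ : ℂ) • pauliY)
    (hZ : Φ pauliZ = (lam₃ : ℂ) • pauliZ)
    (d₁ d₂ d₃ d₄ : ℝ)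
    (hd₁ : d₁ = 1 + t₃ + lam₃) (hd₂ : d₂ = 1 + t₃ - lam₃)
    (hd₃ : d₃ = 1 - t₃ - lam₃) (hd₄ : d₄ = 1 - t₃ + lam₃)
    (hpos : 0 < d₁ ∧ 0 < d₂ ∧ 0 < d₃ ∧ 0 < d₄)
    (Γ₂₃ Γ₁₃ Γ₂₄ Γ₁₄ : ℂ)
    (hΓ₂₃ : Γ₂₃ = ((lam₁ - lam₂ : ℝ) : ℂ) / (Real.sqrt (d₂ * d₃) : ℂ))
    (h23 : ‖Γ₂₃‖ < 1)
    (hΓ₁₃ : Γ₁₃ = ((t₁ : ℂ) + Complex.I * t₂) * (Real.sqrt d₂ : ℂ) /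
      ((Real.sqrt (d₂ * d₃ - (lam₁ - lam₂) ^ 2) : ℂ) * (Real.sqrt d₁ : ℂ)))
    (hΓ₂₄ : Γ₂₄ = ((t₁ : ℂ) + Complex.I * t₂) * (Real.sqrt d₃ : ℂ) /
      ((Real.sqrt (d₂ * d₃ - (lam₁ - lam₂) ^ 2) : ℂ) * (Real.sqrt d₄ : ℂ)))
    (h13 : ‖Γ₁₃‖ < 1) (h24 : ‖Γ₂₄‖ < 1)
    (hΓ₁₄ : Γ₁₄ = (((lam₁ + lam₂ : ℝ) : ℂ) / (Real.sqrt (d₁ * d₄) : ℂ) +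
        Γ₁₃ * (starRingEnd ℂ) Γ₂₃ * Γ₂₄) /
      ((Real.sqrt (1 - ‖Γ₁₃‖ ^ 2) : ℂ) *
        (Real.sqrt (1 - ‖Γ₂₄‖ ^ 2) : ℂ))) :
    IsCompletelyPositive Φ ↔ ‖Γ₁₄‖ ≤ 1 := by
  obtain ⟨h1, h2, h3, h4⟩ := hpos
  have hB00 : (single (0 : Fin 2) (0 : Fin 2) (1:ℂ)) = (2⁻¹ : ℂ) • (1 + pauliZ) := by
    ext i j
    fin_cases i <;> fin_cases j <;>
      simp [pauliZ, Matrix.one_apply, Matrix.single] <;> norm_num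
  have hB11 : (single (1 : Fin 2) (1 : Fin 2) (1:ℂ)) = (2⁻¹ : ℂ) • (1 - pauliZ) := by
    ext i j
    fin_cases i <;> fin_cases j <;>
      simp [pauliZ, Matrix.one_apply, Matrix.single] <;> norm_num
  have hB01 : (single (0 : Fin 2) (1 : Fin 2) (1:ℂ))
      = (2⁻¹ : ℂ) • (pauliX + Complex.I • pauliY) := by
    ext i j
    fin_cases i <;> fin_cases j <;>
      simp [pauliX, pauliY, Matrix.single] <;> norm_num [Complex.ext_iff]
  have hB10 : (single (1 : Fin 2) (0 : Fin 2) (1:ℂ))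
      = (2⁻¹ : ℂ) • (pauliX - Complex.I • pauliY) := by
    ext i j
    fin_cases i <;> fin_cases j <;>
      simp [pauliX, pauliY, Matrix.single] <;> norm_num [Complex.ext_iff]
  have hF00 : Φ (single (0 : Fin 2) (0 : Fin 2) (1:ℂ))
      = !![((1+t₃+lam₃:ℝ):ℂ)/2, ((t₁:ℂ) - (t₂:ℂ)*Complex.I)/2;
           ((t₁:ℂ) + (t₂:ℂ)*Complex.I)/2, ((1-t₃-lam₃:ℝ):ℂ)/2] := by
    rw [hB00, LinearMap.map_smul, map_add, hI, hZ]
    ext i j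
    fin_cases i <;> fin_cases j <;>
      simp [pauliX, pauliY, pauliZ, Matrix.one_apply] <;> push_cast <;> ring
  have hF11 : Φ (single (1 : Fin 2) (1 : Fin 2) (1:ℂ))
      = !![((1+t₃-lam₃:ℝ):ℂ)/2, ((t₁:ℂ) - (t₂:ℂ)*Complex.I)/2;
           ((t₁:ℂ) + (t₂:ℂ)*Complex.I)/2, ((1-t₃+lam₃:ℝ):ℂ)/2] := by
    rw [hB11, LinearMap.map_smul, map_sub, hI, hZ]
    ext i j
    fin_cases i <;> fin_cases j <;>
      simp [pauliX, pauliY, pauliZ, Matrix.one_apply] <;> push_cast <;> ring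
  have hF01 : Φ (single (0 : Fin 2) (1 : Fin 2) (1:ℂ))
      = !![0, ((lam₁+lam₂:ℝ):ℂ)/2; ((lam₁-lam₂:ℝ):ℂ)/2, 0] := by
    rw [hB01, LinearMap.map_smul, map_add, LinearMap.map_smul, hX, hY]
    ext i j
    fin_cases i <;> fin_cases j <;>
      simp [pauliX, pauliY] <;> push_cast <;> ring_nf <;>
        simp [Complex.I_sq] <;> ring
  have hF10 : Φ (single (1 : Fin 2) (0 : Fin 2) (1:ℂ))
      = !![0, ((lam₁-lam₂:ℝ):ℂ)/2; ((lam₁+lam₂:ℝ):ℂ)/2, 0] := by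
    rw [hB10, LinearMap.map_smul, map_sub, LinearMap.map_smul, hX, hY]
    ext i j
    fin_cases i <;> fin_cases j <;>
      simp [pauliX, pauliY] <;> push_cast <;> ring_nf <;>
        simp [Complex.I_sq] <;> ring
  have hpack : ((lam₁-lam₂)^2 < d₂*d₃
      ∧ 0 < d₁*(d₂*d₃-(lam₁-lam₂)^2) - (t₁^2+t₂^2)*d₂
      ∧ 0 < d₄*(d₂*d₃-(lam₁-lam₂)^2) - (t₁^2+t₂^2)*d₃)
      ∧ (‖Γ₁₄‖ ≤ 1 ↔
        ((lam₁+lam₂)*(d₂*d₃-(lam₁-lam₂)^2) + (lam₁-lam₂)*(t₁^2-t₂^2))^2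
          + (2*(lam₁-lam₂)*t₁*t₂)^2
        ≤ (d₁*(d₂*d₃-(lam₁-lam₂)^2) - (t₁^2+t₂^2)*d₂)
          * (d₄*(d₂*d₃-(lam₁-lam₂)^2) - (t₁^2+t₂^2)*d₃)) := by
    -- step 1 : kk > 0
    have hd23 : 0 < d₂ * d₃ := mul_pos h2 h3
    have hs23 : 0 < Real.sqrt (d₂ * d₃) := Real.sqrt_pos.mpr hd23
    have habs23 : ‖Γ₂₃‖ = |lam₁ - lam₂| / Real.sqrt (d₂ * d₃) := by
      rw [hΓ₂₃, norm_div, Complex.norm_real, Real.norm_eq_abs, Complex.norm_real, Real.norm_eq_abs,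
        abs_of_nonneg (Real.sqrt_nonneg _)]
    have hslt : |lam₁ - lam₂| < Real.sqrt (d₂ * d₃) := by
      rw [habs23, div_lt_one hs23] at h23; exact h23
    have hkk : (lam₁ - lam₂)^2 < d₂ * d₃ := by
      have h := Real.sq_sqrt hd23.le
      nlinarith [abs_nonneg (lam₁ - lam₂), sq_abs (lam₁ - lam₂)]
    have hkkpos : 0 < d₂ * d₃ - (lam₁ - lam₂)^2 := by linarith
    -- abs of u
    have hu : ‖(t₁ : ℂ) + Complex.I * t₂‖ = Real.sqrt (t₁^2 + t₂^2) := by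
      rw [Complex.norm_def]
      congr 1
      simp [Complex.normSq_apply]
      ring
    -- step 2 : e₁ > 0
    have habs13 : ‖Γ₁₃‖ ^ 2 = (t₁^2+t₂^2) * d₂ /
        ((d₂*d₃-(lam₁-lam₂)^2) * d₁) := by
      rw [hΓ₁₃, norm_div, norm_mul, norm_mul, hu, Complex.norm_real, Real.norm_eq_abs, Complex.norm_real, Real.norm_eq_abs,
        Complex.norm_real, Real.norm_eq_abs, abs_of_nonneg (Real.sqrt_nonneg _),
        abs_of_nonneg (Real.sqrt_nonneg _), abs_of_nonneg (Real.sqrt_nonneg _),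
        div_pow, mul_pow, mul_pow, Real.sq_sqrt (by positivity), Real.sq_sqrt h2.le,
        Real.sq_sqrt hkkpos.le, Real.sq_sqrt h1.le]
    have he₁ : 0 < d₁*(d₂*d₃-(lam₁-lam₂)^2) - (t₁^2+t₂^2)*d₂ := by
      have hlt : ‖Γ₁₃‖ ^ 2 < 1 :=
        pow_lt_one₀ (norm_nonneg _) h13 two_ne_zero
      rw [habs13, div_lt_one (by positivity)] at hlt
      nlinarith
    have habs24 : ‖Γ₂₄‖ ^ 2 = (t₁^2+t₂^2) * d₃ /
        ((d₂*d₃-(lam₁-lam₂)^2) * d₄) := by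
      rw [hΓ₂₄, norm_div, norm_mul, norm_mul, hu, Complex.norm_real, Real.norm_eq_abs, Complex.norm_real, Real.norm_eq_abs,
        Complex.norm_real, Real.norm_eq_abs, abs_of_nonneg (Real.sqrt_nonneg _),
        abs_of_nonneg (Real.sqrt_nonneg _), abs_of_nonneg (Real.sqrt_nonneg _),
        div_pow, mul_pow, mul_pow, Real.sq_sqrt (by positivity), Real.sq_sqrt h3.le,
        Real.sq_sqrt hkkpos.le, Real.sq_sqrt h4.le]
    have he₂ : 0 < d₄*(d₂*d₃-(lam₁-lam₂)^2) - (t₁^2+t₂^2)*d₃ := by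
      have hlt : ‖Γ₂₄‖ ^ 2 < 1 :=
        pow_lt_one₀ (norm_nonneg _) h24 two_ne_zero
      rw [habs24, div_lt_one (by positivity)] at hlt
      nlinarith
    refine ⟨⟨hkk, he₁, he₂⟩, ?_⟩
    -- numerator simplification
    have hsqrt24 : ((Real.sqrt (d₂*d₃) : ℝ) : ℂ) = (Real.sqrt d₂ : ℂ) * (Real.sqrt d₃ : ℂ) := by
      rw [Real.sqrt_mul h2.le]; push_cast; ring
    have hsqrt14 : ((Real.sqrt (d₁*d₄) : ℝ) : ℂ) = (Real.sqrt d₁ : ℂ) * (Real.sqrt d₄ : ℂ) := by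
      rw [Real.sqrt_mul h1.le]; push_cast; ring
    have hkk2 : ((Real.sqrt (d₂*d₃-(lam₁-lam₂)^2) : ℝ) : ℂ)
        * ((Real.sqrt (d₂*d₃-(lam₁-lam₂)^2) : ℝ) : ℂ) = ((d₂*d₃-(lam₁-lam₂)^2 : ℝ) : ℂ) := by
      rw [← Complex.ofReal_mul, Real.mul_self_sqrt hkkpos.le]
    have hnz : ∀ x : ℝ, 0 < x → ((Real.sqrt x : ℝ) : ℂ) ≠ 0 := fun x hx =>
      Complex.ofReal_ne_zero.mpr (ne_of_gt (Real.sqrt_pos.mpr hx))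
    have hν : ((lam₁ + lam₂ : ℝ) : ℂ) / (Real.sqrt (d₁ * d₄) : ℂ) +
        Γ₁₃ * (starRingEnd ℂ) Γ₂₃ * Γ₂₄
        = (((lam₁+lam₂)*(d₂*d₃-(lam₁-lam₂)^2) + (lam₁-lam₂)*(t₁^2-t₂^2) : ℝ)
            + ((2*(lam₁-lam₂)*t₁*t₂ : ℝ)) * Complex.I) /
          (((d₂*d₃-(lam₁-lam₂)^2 : ℝ) : ℂ) * (Real.sqrt (d₁*d₄) : ℂ)) := by
      have hkk2' : ((Real.sqrt (d₂*d₃-(lam₁-lam₂)^2) : ℝ) : ℂ)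
          * ((Real.sqrt (d₂*d₃-(lam₁-lam₂)^2) : ℝ) : ℂ)
          = (d₂:ℂ)*(d₃:ℂ) - ((lam₁:ℂ)-(lam₂:ℂ))^2 := by
        rw [hkk2]; push_cast; ring
      rw [hΓ₁₃, hΓ₂₃, hΓ₂₄, map_div₀, Complex.conj_ofReal, Complex.conj_ofReal, hsqrt24, hsqrt14]
      have h1' := hnz d₁ h1; have h2' := hnz d₂ h2; have h3' := hnz d₃ h3
      have h4' := hnz d₄ h4; have hk' := hnz _ hkkpos
      push_cast
      rw [← hkk2']
      field_simp
      ring_nf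
      simp only [Complex.I_sq]
      ring
    -- |Γ₁₄|²
    have hr13 : (1 : ℝ) - ‖Γ₁₃‖ ^ 2
        = (d₁*(d₂*d₃-(lam₁-lam₂)^2) - (t₁^2+t₂^2)*d₂) / ((d₂*d₃-(lam₁-lam₂)^2) * d₁) := by
      rw [habs13]; field_simp
    have hr24 : (1 : ℝ) - ‖Γ₂₄‖ ^ 2
        = (d₄*(d₂*d₃-(lam₁-lam₂)^2) - (t₁^2+t₂^2)*d₃) / ((d₂*d₃-(lam₁-lam₂)^2) * d₄) := by
      rw [habs24, eq_div_iff (mul_pos hkkpos h4).ne', sub_mul,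
        div_mul_cancel₀ _ (mul_pos hkkpos h4).ne']; ring
    have habsν : ‖((((lam₁+lam₂)*(d₂*d₃-(lam₁-lam₂)^2) + (lam₁-lam₂)*(t₁^2-t₂^2) : ℝ) : ℂ)
        + ((2*(lam₁-lam₂)*t₁*t₂ : ℝ)) * Complex.I)‖ ^ 2
        = ((lam₁+lam₂)*(d₂*d₃-(lam₁-lam₂)^2) + (lam₁-lam₂)*(t₁^2-t₂^2))^2
          + (2*(lam₁-lam₂)*t₁*t₂)^2 := by
      rw [Complex.sq_norm, Complex.normSq_add_mul_I]
    have habs14 : ‖Γ₁₄‖ ^ 2 =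
        (((lam₁+lam₂)*(d₂*d₃-(lam₁-lam₂)^2) + (lam₁-lam₂)*(t₁^2-t₂^2))^2
          + (2*(lam₁-lam₂)*t₁*t₂)^2) /
        ((d₁*(d₂*d₃-(lam₁-lam₂)^2) - (t₁^2+t₂^2)*d₂)
          * (d₄*(d₂*d₃-(lam₁-lam₂)^2) - (t₁^2+t₂^2)*d₃)) := by
      rw [hΓ₁₄, hν, norm_div, norm_div, norm_mul, norm_mul, Complex.norm_real, Real.norm_eq_abs,
        Complex.norm_real, Real.norm_eq_abs, Complex.norm_real, Real.norm_eq_abs, Complex.norm_real, Real.norm_eq_abs,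
        abs_of_nonneg (Real.sqrt_nonneg (d₁*d₄)),
        abs_of_nonneg (Real.sqrt_nonneg _), abs_of_nonneg (Real.sqrt_nonneg _),
        abs_of_nonneg hkkpos.le]
      rw [div_pow, div_pow, mul_pow, mul_pow, habsν,
        Real.sq_sqrt (by positivity : (0:ℝ) ≤ d₁*d₄),
        Real.sq_sqrt (show (0:ℝ) ≤ 1 - ‖Γ₁₃‖^2 by rw [hr13]; positivity),
        Real.sq_sqrt (show (0:ℝ) ≤ 1 - ‖Γ₂₄‖^2 by rw [hr24]; positivity),
        hr13, hr24]
      field_simp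
    -- final iff
    have h14nonneg := norm_nonneg Γ₁₄
    constructor
    · intro h
      have : ‖Γ₁₄‖ ^ 2 ≤ 1 := pow_le_one₀ h14nonneg h
      rw [habs14, div_le_one (by positivity)] at this
      linarith
    · intro h
      have h2' : ‖Γ₁₄‖ ^ 2 ≤ 1 := by
        rw [habs14, div_le_one (by positivity)]; linarith
      nlinarith
  obtain ⟨⟨hkkmain, he₁main, he₂main⟩, hiff14⟩ := hpack
  -- Choi matrix identification
  have hchoi : (choiM Φ).submatrix e4 e4
      = M4mat t₁ t₂ (lam₁-lam₂) (lam₁+lam₂) (1+t₃+lam₃) (1+t₃-lam₃) (1-t₃-lam₃) (1-t₃+lam₃) := by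
    unfold M4mat choiM
    ext i j
    fin_cases i <;> fin_cases j <;>
      simp [e4, hF00, hF01, hF10, hF11]
  rw [← hd₁, ← hd₂, ← hd₃, ← hd₄] at hchoi
  set E1 : ℝ := d₁*(d₂*d₃-(lam₁-lam₂)^2) - (t₁^2+t₂^2)*d₂ with hE1def
  set E2 : ℝ := d₄*(d₂*d₃-(lam₁-lam₂)^2) - (t₁^2+t₂^2)*d₃ with hE2def
  set P3 : ℝ := E1/(d₁*d₂) with hP3def
  set P4 : ℝ := d₄ - (lam₁+lam₂)^2/d₁ - (t₁^2+t₂^2)/d₂ -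
      ((t₁^2+t₂^2)*((lam₁+lam₂)^2/d₁^2+(lam₁-lam₂)^2/d₂^2)
        +2*(lam₁+lam₂)*(lam₁-lam₂)*(t₁^2-t₂^2)/(d₁*d₂))/P3 with hP4def
  clear_value E1 E2 P3 P4
  have hkkpos : 0 < d₂*d₃-(lam₁-lam₂)^2 := by linarith
  have hP3pos : 0 < P3 := by
    rw [hP3def]
    exact div_pos he₁main (by positivity)
  have hldl := ldl_eq t₁ t₂ (lam₁-lam₂) (lam₁+lam₂) d₁ d₂ d₃ d₄ E1 P3 P4
    h1.ne' h2.ne' he₁main.ne' (by rw [hE1def]) (by rw [hP3def]) (by rw [hP4def, hP3def])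
  have hkl := kl_eq t₁ t₂ (lam₁-lam₂) (lam₁+lam₂) d₁ d₂ P3 h1.ne' h2.ne' hP3pos.ne'
  have step1 : IsCompletelyPositive Φ ↔ (choiM Φ).PosSemidef :=
    cp_iff_choi (by norm_num) Φ
  have step2 : (choiM Φ).PosSemidef ↔
      (M4mat t₁ t₂ (lam₁-lam₂) (lam₁+lam₂) d₁ d₂ d₃ d₄).PosSemidef := by
    rw [← hchoi]
    exact (Matrix.posSemidef_submatrix_equiv e4).symm
  have step3 : (M4mat t₁ t₂ (lam₁-lam₂) (lam₁+lam₂) d₁ d₂ d₃ d₄).PosSemidef ↔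
      (Dmat d₁ d₂ P3 P4).PosSemidef := by
    constructor
    · intro h
      have h' := h.mul_mul_conjTranspose_same (Kmat t₁ t₂ (lam₁-lam₂) (lam₁+lam₂) d₁ d₂ P3)
      have heq : Kmat t₁ t₂ (lam₁-lam₂) (lam₁+lam₂) d₁ d₂ P3
          * M4mat t₁ t₂ (lam₁-lam₂) (lam₁+lam₂) d₁ d₂ d₃ d₄
          * (Kmat t₁ t₂ (lam₁-lam₂) (lam₁+lam₂) d₁ d₂ P3)ᴴ = Dmat d₁ d₂ P3 P4 := by
        rw [hldl]
        rw [show Kmat t₁ t₂ (lam₁-lam₂) (lam₁+lam₂) d₁ d₂ P3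
            * (Lmat t₁ t₂ (lam₁-lam₂) (lam₁+lam₂) d₁ d₂ P3 * Dmat d₁ d₂ P3 P4
              * (Lmat t₁ t₂ (lam₁-lam₂) (lam₁+lam₂) d₁ d₂ P3)ᴴ)
            * (Kmat t₁ t₂ (lam₁-lam₂) (lam₁+lam₂) d₁ d₂ P3)ᴴ
          = (Kmat t₁ t₂ (lam₁-lam₂) (lam₁+lam₂) d₁ d₂ P3
              * Lmat t₁ t₂ (lam₁-lam₂) (lam₁+lam₂) d₁ d₂ P3) * Dmat d₁ d₂ P3 P4
            * ((Lmat t₁ t₂ (lam₁-lam₂) (lam₁+lam₂) d₁ d₂ P3)ᴴ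
              * (Kmat t₁ t₂ (lam₁-lam₂) (lam₁+lam₂) d₁ d₂ P3)ᴴ) from by
          simp only [Matrix.mul_assoc]]
        rw [← Matrix.conjTranspose_mul, hkl, Matrix.conjTranspose_one, Matrix.one_mul,
          Matrix.mul_one]
      rwa [heq] at h'
    · intro h
      rw [hldl]
      exact h.mul_mul_conjTranspose_same _
  have step4 : (Dmat d₁ d₂ P3 P4).PosSemidef ↔ 0 ≤ P4 := by
    unfold Dmat
    rw [Matrix.posSemidef_diagonal_iff]
    constructor
    · intro h
      have h3' : (0:ℂ) ≤ ((P4/2:ℝ):ℂ) := h 3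
      rw [Complex.zero_le_real] at h3'
      linarith
    · intro h i
      fin_cases i
      · exact Complex.zero_le_real.mpr (by linarith)
      · exact Complex.zero_le_real.mpr (by linarith)
      · exact Complex.zero_le_real.mpr (by linarith [hP3pos])
      · exact Complex.zero_le_real.mpr (by linarith)
  have step5 : 0 ≤ P4 ↔
      ((lam₁+lam₂)*(d₂*d₃-(lam₁-lam₂)^2) + (lam₁-lam₂)*(t₁^2-t₂^2))^2
        + (2*(lam₁-lam₂)*t₁*t₂)^2 ≤ E1 * E2 := by
    have hiden : P4 = (E1*E2 - (((lam₁+lam₂)*(d₂*d₃-(lam₁-lam₂)^2) + (lam₁-lam₂)*(t₁^2-t₂^2))^2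
        + (2*(lam₁-lam₂)*t₁*t₂)^2))/((d₂*d₃-(lam₁-lam₂)^2)*E1) := by
      have hkne : d₂*d₃-(lam₁-lam₂)^2 ≠ 0 := hkkpos.ne'
      have hE1ne : d₁*(d₂*d₃-(lam₁-lam₂)^2) - (t₁^2+t₂^2)*d₂ ≠ 0 := by
        rw [← hE1def]; exact he₁main.ne'
      rw [hP4def, hP3def, hE1def, hE2def]
      field_simp
      ring
    have hcpos : 0 < (d₂*d₃-(lam₁-lam₂)^2)*E1 := mul_pos hkkpos he₁main
    constructor
    · intro h
      rw [hiden] at h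
      have h' := mul_nonneg h hcpos.le
      rw [div_mul_cancel₀ _ hcpos.ne'] at h'
      linarith
    · intro h
      rw [hiden]
      exact div_nonneg (by linarith) hcpos.le
  exact step1.trans (step2.trans (step3.trans (step4.trans (step5.trans hiff14.symm))))

end
end

section
/- Let t₁, t₂, t₃, λ₁, λ₂, λ₃ be real numbers and let Φ_{t,Λ} : M_2(ℂ) → M_2(ℂ) be the linear map determined by Φ_{t,Λ}(I) = I + t₁σ_x + t₂σ_y + t₃σ_z, Φ_{t,Λ}(σ_x) = λ₁σ_x, Φ_{t,Λ}(σ_y) = λ₂σ_y, Φ_{t,Λ}(σ_z) = λ₃σ_z. Set d₁ = 1+t₃+λ₃, d₂ = 1+t₃−λ₃, d₃ = 1−t₃−λ₃, d₄ = 1−t₃+λ₃ and assume d₂ > 0, d₃ > 0 and (λ₁−λ₂)² = d₂d₃ (i.e. the parameter Γ₂₃ = (λ₁−λ₂)/√(d₂d₃) has modulus 1). If Φ_{t,Λ} is completely positive, then t₁ = 0, t₂ = 0, d₁ ≥ 0, d₄ ≥ 0, and there exists a complex number Γ₁₄ with |Γ₁₄| ≤ 1 such that λ₁+λ₂ = √d₁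 · Γ₁₄ · √d₄. -/
open Matrix
open scoped ComplexOrder

noncomputable section

set_option maxHeartbeats 1000000

/-- The degenerate case `|Γ₂₃| = 1`: if `Φ_{t,Λ}` is completely positive then `t₁ = t₂ = 0`,
`d₁, d₄ ≥ 0`, and `λ₁ + λ₂ = √d₁ · Γ₁₄ · √d₄` for some contraction `Γ₁₄`. -/
theorem stmt_11 (t₁ t₂ t₃ lam₁ lam₂ lam₃ : ℝ)
    (Φ : Matrix (Fin 2) (Fin 2) ℂ →ₗ[ℂ] Matrix (Fin 2) (Fin 2) ℂ)
    (hI : Φ 1 = 1 + (t₁ : ℂ) • pauliX + (t₂ : ℂ) • pauliY + (t₃ : ℂ) • pauliZ)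
    (hX : Φ pauliX = (lam₁ : ℂ) • pauliX)
    (hY : Φ pauliY = (lam₂ : ℂ) • pauliY)
    (hZ : Φ pauliZ = (lam₃ : ℂ) • pauliZ)
    (d₁ d₂ d₃ d₄ : ℝ)
    (hd₁ : d₁ = 1 + t₃ + lam₃) (hd₂ : d₂ = 1 + t₃ - lam₃)
    (hd₃ : d₃ = 1 - t₃ - lam₃) (hd₄ : d₄ = 1 - t₃ + lam₃)
    (hd₂pos : 0 < d₂) (hd₃pos : 0 < d₃)
    (hdeg : (lam₁ - lam₂) ^ 2 = d₂ * d₃)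
    (hCP : IsCompletelyPositive Φ) :
    t₁ = 0 ∧ t₂ = 0 ∧ 0 ≤ d₁ ∧ 0 ≤ d₄ ∧
      ∃ Γ₁₄ : ℂ, ‖Γ₁₄‖ ≤ 1 ∧
        ((lam₁ + lam₂ : ℝ) : ℂ) = (Real.sqrt d₁ : ℂ) * Γ₁₄ * (Real.sqrt d₄ : ℂ) := by
  -- Φ on standard basis matrices
  have hE00 : Φ (Matrix.single (0:Fin 2) (0:Fin 2) (1:ℂ)) =
      !![((d₁:ℝ):ℂ)/2, ((t₁:ℂ) - t₂*Complex.I)/2;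
         ((t₁:ℂ) + t₂*Complex.I)/2, ((d₃:ℝ):ℂ)/2] := by
    have h : (Matrix.single (0:Fin 2) (0:Fin 2) (1:ℂ)) = (1/2 : ℂ) • (1 + pauliZ) := by
      ext i j; fin_cases i <;> fin_cases j <;>
        simp [pauliZ, Matrix.single, Matrix.one_apply] <;> norm_num
    rw [h, _root_.map_smul, map_add, hI, hZ]
    subst hd₁ hd₃
    ext i j; fin_cases i <;> fin_cases j <;>
      (simp [pauliX, pauliY, pauliZ, Matrix.one_apply]; push_cast; ring)
  have hE11 : Φ (Matrix.single (1:Fin 2) (1:Fin 2) (1:ℂ)) =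
      !![((d₂:ℝ):ℂ)/2, ((t₁:ℂ) - t₂*Complex.I)/2;
         ((t₁:ℂ) + t₂*Complex.I)/2, ((d₄:ℝ):ℂ)/2] := by
    have h : (Matrix.single (1:Fin 2) (1:Fin 2) (1:ℂ)) = (1/2 : ℂ) • (1 - pauliZ) := by
      ext i j; fin_cases i <;> fin_cases j <;>
        simp [pauliZ, Matrix.single, Matrix.one_apply] <;> norm_num
    rw [h, _root_.map_smul, map_sub, hI, hZ]
    subst hd₂ hd₄
    ext i j; fin_cases i <;> fin_cases j <;>
      (simp [pauliX, pauliY, pauliZ, Matrix.one_apply]; push_cast; ring)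
  have hE01 : Φ (Matrix.single (0:Fin 2) (1:Fin 2) (1:ℂ)) =
      !![0, ((lam₁ + lam₂ : ℝ):ℂ)/2; ((lam₁ - lam₂ : ℝ):ℂ)/2, 0] := by
    have h : (Matrix.single (0:Fin 2) (1:Fin 2) (1:ℂ))
        = (1/2 : ℂ) • (pauliX + Complex.I • pauliY) := by
      ext i j; fin_cases i <;> fin_cases j <;>
        simp [pauliX, pauliY, Matrix.single] <;> norm_num
    rw [h, _root_.map_smul, map_add, _root_.map_smul, hX, hY]
    ext i j; fin_cases i <;> fin_cases j <;>
      (simp [pauliX, pauliY]; try push_cast; try ring_nf; try simp [Complex.I_sq]; try ring)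
  have hE10 : Φ (Matrix.single (1:Fin 2) (0:Fin 2) (1:ℂ)) =
      !![0, ((lam₁ - lam₂ : ℝ):ℂ)/2; ((lam₁ + lam₂ : ℝ):ℂ)/2, 0] := by
    have h : (Matrix.single (1:Fin 2) (0:Fin 2) (1:ℂ))
        = (1/2 : ℂ) • (pauliX - Complex.I • pauliY) := by
      ext i j; fin_cases i <;> fin_cases j <;>
        simp [pauliX, pauliY, Matrix.single] <;> norm_num
    rw [h, _root_.map_smul, map_sub, _root_.map_smul, hX, hY]
    ext i j; fin_cases i <;> fin_cases j <;>
      (simp [pauliX, pauliY]; try push_cast; try ring_nf; try simp [Complex.I_sq]; try ring)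

  -- Choi matrix
  have hM := hCP 2 (by norm_num)
      ((Matrix.of fun (_ : Fin 1) (p : Fin 2 × Fin 2) => if p.1 = p.2 then (1:ℂ) else 0)ᴴ *
        (Matrix.of fun (_ : Fin 1) (p : Fin 2 × Fin 2) => if p.1 = p.2 then (1:ℂ) else 0))
      (Matrix.posSemidef_conjTranspose_mul_self _)
  have hsub := hM.submatrix ![((0:Fin 2),(0:Fin 2)),(0,1),(1,0),(1,1)]
  have hMeq : ((Matrix.of fun (p q : Fin 2 × Fin 2) => ∑ k : Fin 2, ∑ l : Fin 2,
      Φ (Matrix.single k l 1) p.1 q.1 *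
        ((Matrix.of fun (_ : Fin 1) (p : Fin 2 × Fin 2) => if p.1 = p.2 then (1:ℂ) else 0)ᴴ *
         (Matrix.of fun (_ : Fin 1) (p : Fin 2 × Fin 2) => if p.1 = p.2 then (1:ℂ) else 0)) (k, p.2) (l, q.2)).submatrix
        ![((0:Fin 2),(0:Fin 2)),(0,1),(1,0),(1,1)] ![((0:Fin 2),(0:Fin 2)),(0,1),(1,0),(1,1)]) =
      !![((d₁:ℝ):ℂ)/2, 0, ((t₁:ℂ) - t₂*Complex.I)/2, ((lam₁+lam₂:ℝ):ℂ)/2;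
         0, ((d₂:ℝ):ℂ)/2, ((lam₁-lam₂:ℝ):ℂ)/2, ((t₁:ℂ) - t₂*Complex.I)/2;
         ((t₁:ℂ) + t₂*Complex.I)/2, ((lam₁-lam₂:ℝ):ℂ)/2, ((d₃:ℝ):ℂ)/2, 0;
         ((lam₁+lam₂:ℝ):ℂ)/2, ((t₁:ℂ) + t₂*Complex.I)/2, 0, ((d₄:ℝ):ℂ)/2] := by
    ext i j
    fin_cases i <;> fin_cases j <;>
      simp [Matrix.mul_apply, Matrix.conjTranspose_apply, Fin.sum_univ_two,
        Fin.sum_univ_one, hE00, hE01, hE10, hE11]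
  rw [hMeq] at hsub
  have key := hsub.dotProduct_mulVec_nonneg
  -- d₁ ≥ 0
  have hq1 := key ![1,0,0,0]
  simp [dotProduct, Matrix.mulVec, Fin.sum_univ_four] at hq1
  rw [show ((d₁:ℂ)/2) = (((d₁/2:ℝ)):ℂ) by norm_num, Complex.zero_le_real] at hq1
  have hd₁nn : (0:ℝ) ≤ d₁ := by linarith
  -- d₄ ≥ 0
  have hq2 := key ![0,0,0,1]
  simp [dotProduct, Matrix.mulVec, Fin.sum_univ_four] at hq2
  rw [show ((d₄:ℂ)/2) = (((d₄/2:ℝ)):ℂ) by norm_num, Complex.zero_le_real] at hq2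
  have hd₄nn : (0:ℝ) ≤ d₄ := by linarith
  have hd4p : (0:ℝ) < d₄ + 1 := by linarith
  -- t₁ = t₂ = 0
  have hq3 := key ![0, ((d₃:ℝ):ℂ), ((-(lam₁-lam₂):ℝ):ℂ),
    -(((d₃/(d₄+1)):ℝ):ℂ)*((t₁:ℂ)+(t₂:ℂ)*Complex.I)]
  have hq3' := (Complex.le_def.mp hq3).1
  simp [dotProduct, Matrix.mulVec, Fin.sum_univ_four, Complex.add_re, Complex.mul_re,
    Complex.add_im, Complex.mul_im, Complex.div_re, Complex.div_im, Complex.normSq] at hq3'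
  have hk : t₁^2 + t₂^2 ≤ 0 := by
    have h4 : d₃ * (d₄ + 1) / ((d₄ + 1) * (d₄ + 1)) = d₃ / (d₄ + 1) := by
      field_simp
    rw [h4] at hq3'
    set ε := d₃ / (d₄ + 1) with hε
    have hεeq : ε * (d₄ + 1) = d₃ := by rw [hε]; field_simp
    have hεpos : 0 < ε := by rw [hε]; positivity
    have h5 : 0 ≤ (t₁^2+t₂^2)*(ε*ε*d₄/2 - ε*d₃) := by nlinarith [hq3', hdeg, hd₃pos]
    have hp1 : 0 < ε*d₃ := mul_pos hεpos hd₃pos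
    have hp2 : 0 < ε*ε := mul_pos hεpos hεpos
    have h6 : ε*ε*d₄/2 - ε*d₃ < 0 := by nlinarith [hεeq, hεpos, hd₃pos, hp1, hp2]
    by_contra hc
    push_neg at hc
    nlinarith [h5, mul_pos hc (show (0:ℝ) < -(ε*ε*d₄/2 - ε*d₃) by linarith)]
  have ht₁ : t₁ = 0 := by nlinarith [sq_nonneg t₁, sq_nonneg t₂]
  have ht₂ : t₂ = 0 := by nlinarith [sq_nonneg t₁, sq_nonneg t₂]
  -- generic 2-vector quadratic form in coordinates 0, 3
  have q4 : ∀ a b : ℝ, 0 ≤ d₁*a^2 + 2*(lam₁+lam₂)*a*b + d₄*b^2 := by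
    intro a b
    have h := key ![(a:ℂ), 0, 0, (b:ℂ)]
    have h' := (Complex.le_def.mp h).1
    simp [dotProduct, Matrix.mulVec, Fin.sum_univ_four, Complex.add_re, Complex.mul_re,
      Complex.add_im, Complex.mul_im, Complex.div_re, Complex.div_im, Complex.normSq] at h'
    nlinarith [h']
  refine ⟨ht₁, ht₂, hd₁nn, hd₄nn, ?_⟩
  by_cases hd₁0 : d₁ = 0
  · -- then lam₁ + lam₂ = 0
    have hs : lam₁ + lam₂ = 0 := by
      have h := q4 (d₄+1) (-(lam₁+lam₂))
      rw [hd₁0] at h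
      have hsq : (lam₁+lam₂)^2 ≤ 0 := by
        nlinarith [h, hd₄nn, sq_nonneg (lam₁+lam₂)]
      have h0 : (lam₁+lam₂)^2 = 0 := le_antisymm hsq (sq_nonneg _)
      exact pow_eq_zero_iff two_ne_zero |>.mp h0
    exact ⟨0, by simp, by rw [hs, hd₁0]; simp⟩
  · have hd₁pos : 0 < d₁ := lt_of_le_of_ne hd₁nn (Ne.symm hd₁0)
    have hs2 : (lam₁+lam₂)^2 ≤ d₁ * d₄ := by
      have h := q4 (lam₁+lam₂) (-d₁)
      nlinarith [h, hd₁pos]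
    by_cases hd₄0 : d₄ = 0
    · have hs : lam₁ + lam₂ = 0 := by nlinarith [sq_nonneg (lam₁+lam₂)]
      exact ⟨0, by simp, by rw [hs, hd₄0]; simp⟩
    · have hd₄pos : 0 < d₄ := lt_of_le_of_ne hd₄nn (Ne.symm hd₄0)
      refine ⟨(((lam₁+lam₂) / (Real.sqrt d₁ * Real.sqrt d₄) : ℝ) : ℂ), ?_, ?_⟩
      · rw [Complex.norm_real, Real.norm_eq_abs, abs_div]
        have hsq : 0 < Real.sqrt d₁ * Real.sqrt d₄ := by positivity
        rw [div_le_one (by rwa [abs_of_pos hsq])]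
        rw [abs_of_pos hsq, ← Real.sqrt_mul hd₁nn]
        have : |lam₁+lam₂| = Real.sqrt ((lam₁+lam₂)^2) := by
          rw [Real.sqrt_sq_eq_abs]
        rw [this]
        exact Real.sqrt_le_sqrt hs2
      · have h1 : Real.sqrt d₁ ≠ 0 := by positivity
        have h2 : Real.sqrt d₄ ≠ 0 := by positivity
        push_cast
        field_simp

end
end

section
/- Let S = [S_{kj}]_{k,j=1}^4 be a positive semidefinite Hermitian 4×4 complex matrix with strictly positive diagonal entries S_{kk} > 0 and with S_{12} = 0 and S_{34} = 0. Define Γ₂₃ = S_{23}/(S_{22}^{1/2} S_{33}^{1/2}) and assume |Γ₂₃| < 1; define Γ₁₃ = S_{13}/(S_{11}^{1/2} (1−|Γ₂₃|²)^{1/2} S_{33}^{1/2}) and Γ₂₄ = S_{24}/(S_{22}^{1/2} (1−|Γ₂₃|²)^{1/2} S_{44}^{1/2}). If |Γ₁₃| = 1 or |Γ₂₄| = 1, then S_{14} = S_{11}^{1/2} (−Γ₁₃ · conj(Γ₂₃) · Γ₂₄) S_{44}^{1/2}. -/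
open Complex Matrix
open scoped ComplexOrder

/-- The degenerate case `|Γ₁₃| = 1` or `|Γ₂₄| = 1` for a positive semidefinite 4×4 matrix
with `S₁₂ = S₃₄ = 0`: then `S₁₄ = √S₁₁ · (−Γ₁₃ · conj(Γ₂₃) · Γ₂₄) · √S₄₄`. -/
theorem stmt_12 (S : Matrix (Fin 4) (Fin 4) ℂ) (hS : S.PosSemidef)
    (hdiag : ∀ k, 0 < (S k k).re) (h12 : S 0 1 = 0) (h34 : S 2 3 = 0)
    (Γ₂₃ Γ₁₃ Γ₂₄ : ℂ)
    (hΓ₂₃ : Γ₂₃ = S 1 2 / ((Real.sqrt (S 1 1).re : ℂ) * (Real.sqrt (S 2 2).re : ℂ)))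
    (h23 : ‖Γ₂₃‖ < 1)
    (hΓ₁₃ : Γ₁₃ = S 0 2 / ((Real.sqrt (S 0 0).re : ℂ) *
      (Real.sqrt (1 - ‖Γ₂₃‖ ^ 2) : ℂ) * (Real.sqrt (S 2 2).re : ℂ)))
    (hΓ₂₄ : Γ₂₄ = S 1 3 / ((Real.sqrt (S 1 1).re : ℂ) *
      (Real.sqrt (1 - ‖Γ₂₃‖ ^ 2) : ℂ) * (Real.sqrt (S 3 3).re : ℂ)))
    (hdeg : ‖Γ₁₃‖ = 1 ∨ ‖Γ₂₄‖ = 1) :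
    S 0 3 = (Real.sqrt (S 0 0).re : ℂ) *
      (-(Γ₁₃ * (starRingEnd ℂ) Γ₂₃ * Γ₂₄)) * (Real.sqrt (S 3 3).re : ℂ) := by
  have hH := hS.1
  set A : ℂ := (Real.sqrt (S 0 0).re : ℂ) with hAdef
  set B : ℂ := (Real.sqrt (S 1 1).re : ℂ) with hBdef
  set C : ℂ := (Real.sqrt (S 2 2).re : ℂ) with hCdef
  set F : ℂ := (Real.sqrt (S 3 3).re : ℂ) with hFdef
  set E : ℂ := (Real.sqrt (1 - ‖Γ₂₃‖ ^ 2) : ℂ) with hEdef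
  have habs : ∀ z : ℂ, ((‖z‖ ^ 2 : ℝ) : ℂ) = z * (starRingEnd ℂ) z := by
    intro z
    rw [Complex.sq_norm]
    exact_mod_cast (Complex.mul_conj z).symm
  have hre : ∀ k, S k k = ((S k k).re : ℂ) := by
    intro k
    have := hH.apply k k
    rw [Complex.star_def] at this
    exact (Complex.conj_eq_iff_re.mp this).symm
  have hA2 : A ^ 2 = S 0 0 := by
    rw [hAdef, ← Complex.ofReal_pow, Real.sq_sqrt (hdiag 0).le, ← hre 0]
  have hB2 : B ^ 2 = S 1 1 := by
    rw [hBdef, ← Complex.ofReal_pow, Real.sq_sqrt (hdiag 1).le, ← hre 1]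
  have hC2 : C ^ 2 = S 2 2 := by
    rw [hCdef, ← Complex.ofReal_pow, Real.sq_sqrt (hdiag 2).le, ← hre 2]
  have hF2 : F ^ 2 = S 3 3 := by
    rw [hFdef, ← Complex.ofReal_pow, Real.sq_sqrt (hdiag 3).le, ← hre 3]
  have h23pos : (0:ℝ) < 1 - ‖Γ₂₃‖ ^ 2 := by
    have h0 := norm_nonneg Γ₂₃
    nlinarith
  have hE2 : E ^ 2 = 1 - Γ₂₃ * (starRingEnd ℂ) Γ₂₃ := by
    rw [hEdef, ← Complex.ofReal_pow, Real.sq_sqrt h23pos.le, ← habs Γ₂₃]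
    push_cast
    ring
  have hA0 : A ≠ 0 := by
    rw [hAdef]
    exact_mod_cast (Real.sqrt_pos.mpr (hdiag 0)).ne'
  have hB0 : B ≠ 0 := by
    rw [hBdef]
    exact_mod_cast (Real.sqrt_pos.mpr (hdiag 1)).ne'
  have hC0 : C ≠ 0 := by
    rw [hCdef]
    exact_mod_cast (Real.sqrt_pos.mpr (hdiag 2)).ne'
  have hF0 : F ≠ 0 := by
    rw [hFdef]
    exact_mod_cast (Real.sqrt_pos.mpr (hdiag 3)).ne'
  have hE0 : E ≠ 0 := by
    rw [hEdef]
    exact_mod_cast (Real.sqrt_pos.mpr h23pos).ne'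
  have hAc : (starRingEnd ℂ) A = A := by rw [hAdef]; exact Complex.conj_ofReal _
  have hBc : (starRingEnd ℂ) B = B := by rw [hBdef]; exact Complex.conj_ofReal _
  have hCc : (starRingEnd ℂ) C = C := by rw [hCdef]; exact Complex.conj_ofReal _
  have hFc : (starRingEnd ℂ) F = F := by rw [hFdef]; exact Complex.conj_ofReal _
  have hEc : (starRingEnd ℂ) E = E := by rw [hEdef]; exact Complex.conj_ofReal _
  have hS12 : S 1 2 = Γ₂₃ * (B * C) := by
    rw [hΓ₂₃]; field_simp
  have hS02 : S 0 2 = Γ₁₃ * (A * E * C) := by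
    rw [hΓ₁₃]; field_simp
  have hS13 : S 1 3 = Γ₂₄ * (B * E * F) := by
    rw [hΓ₂₄]; field_simp
  have hc : ∀ i j, S i j = (starRingEnd ℂ) (S j i) := by
    intro i j
    have := hH.apply i j
    rw [Complex.star_def] at this
    exact this.symm
  rcases hdeg with h1 | h1
  · -- |Γ₁₃| = 1
    have hu : Γ₁₃ * (starRingEnd ℂ) Γ₁₃ = 1 := by
      rw [← habs Γ₁₃, h1]; norm_num
    set w : Fin 4 → ℂ := ![Γ₁₃ * E * B * C, Γ₂₃ * A * C, -(A * B), 0] with hwdef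
    have hq : star w ⬝ᵥ S *ᵥ w = 0 := by
      simp only [hwdef, dotProduct, Matrix.mulVec, Fin.sum_univ_four, Pi.star_apply,
        Matrix.cons_val_zero, Matrix.cons_val_one, Matrix.head_cons, Matrix.cons_val_two,
        Matrix.cons_val_three, Matrix.tail_cons, Complex.star_def, _root_.map_mul, map_neg, map_zero,
        hAc, hBc, hCc, hEc]
      rw [hc 1 0, hc 2 0, hc 2 1, h12, hS02, hS12, hS13, ← hA2, ← hB2, ← hC2]
      simp only [_root_.map_mul, map_zero, hAc, hBc, hCc, hEc]
      linear_combination (-(A^2*B^2*C^2)) * hE2 + (-(A^2*B^2*C^2)*E^2) * hu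
    have hz := (hS.dotProduct_mulVec_zero_iff w).mp hq
    have h3 := congrFun hz 3
    simp only [hwdef, Matrix.mulVec, dotProduct, Fin.sum_univ_four,
      Matrix.cons_val_zero, Matrix.cons_val_one, Matrix.head_cons, Matrix.cons_val_two,
      Matrix.cons_val_three, Matrix.tail_cons, Pi.zero_apply, mul_zero, add_zero] at h3
    rw [hc 3 0, hc 3 1, hc 3 2, h34, hS13] at h3
    simp only [_root_.map_mul, map_zero, zero_mul, add_zero, hBc, hEc, hFc] at h3
    have hΓ₁₃0 : Γ₁₃ ≠ 0 := left_ne_zero_of_mul_eq_one hu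
    refine (starRingEnd ℂ).injective ?_
    have hne : Γ₁₃ * E * B * C ≠ 0 :=
      mul_ne_zero (mul_ne_zero (mul_ne_zero hΓ₁₃0 hE0) hB0) hC0
    refine mul_right_cancel₀ hne ?_
    simp only [_root_.map_mul, map_neg, Complex.conj_conj, hAc, hFc]
    linear_combination h3 + (A*B*C*E*F*Γ₂₃*((starRingEnd ℂ) Γ₂₄)) * hu
  · -- |Γ₂₄| = 1
    have hv : Γ₂₄ * (starRingEnd ℂ) Γ₂₄ = 1 := by
      rw [← habs Γ₂₄, h1]; norm_num
    set w : Fin 4 → ℂ := ![0, -(C * F), (starRingEnd ℂ) Γ₂₃ * B * F,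
      (starRingEnd ℂ) Γ₂₄ * E * B * C] with hwdef
    have hq : star w ⬝ᵥ S *ᵥ w = 0 := by
      simp only [hwdef, dotProduct, Matrix.mulVec, Fin.sum_univ_four, Pi.star_apply,
        Matrix.cons_val_zero, Matrix.cons_val_one, Matrix.head_cons, Matrix.cons_val_two,
        Matrix.cons_val_three, Matrix.tail_cons, Complex.star_def, _root_.map_mul, map_neg, map_zero,
        Complex.conj_conj, hBc, hCc, hEc, hFc]
      rw [hc 2 1, hc 3 1, hc 3 2, h34, hS12, hS13, ← hB2, ← hC2, ← hF2]
      simp only [_root_.map_mul, map_zero, hBc, hCc, hEc, hFc]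
      linear_combination (-(B^2*C^2*F^2)) * hE2 + (-(B^2*C^2*F^2)*E^2) * hv
    have hz := (hS.dotProduct_mulVec_zero_iff w).mp hq
    have h0 := congrFun hz 0
    simp only [hwdef, Matrix.mulVec, dotProduct, Fin.sum_univ_four,
      Matrix.cons_val_zero, Matrix.cons_val_one, Matrix.head_cons, Matrix.cons_val_two,
      Matrix.cons_val_three, Matrix.tail_cons, Pi.zero_apply, mul_zero, zero_add] at h0
    rw [h12, hS02] at h0
    have hΓ₂₄0 : (starRingEnd ℂ) Γ₂₄ ≠ 0 := right_ne_zero_of_mul_eq_one hv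
    have hne : (starRingEnd ℂ) Γ₂₄ * E * B * C ≠ 0 :=
      mul_ne_zero (mul_ne_zero (mul_ne_zero hΓ₂₄0 hE0) hB0) hC0
    refine mul_right_cancel₀ hne ?_
    linear_combination h0 + (A*B*C*E*F*Γ₁₃*((starRingEnd ℂ) Γ₂₃)) * hv
end
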